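/- arXiv:1302.3064 — 4 statements merged into one kernel-verified Lean document; each statement's English description precedes it below -/
import Mathlib

section
/- Let G be a graph and e = (u,v) an edge of G. If L(G;e) denotes the graph obtained from G by replacing the edge e with an induced path u − y − a − b − v through three new vertices (triple subdivision of e), then the decycling numbers satisfy ∇(L(G;e)) = ∇(G). -/
open scoped Classical

noncomputable section

/-! ## Simplicial complexes and Castelnuovo–Mumford regularity -/

/-- A (abstract) simplicial complex on the vertex type `V`, given as a
downward closed family of finsets. -/
def IsComplex {V : Type} (Δ : Finset V → Prop) : Prop :=
  ∀ ⦃F G : Finset V⦄, Δ F → G ⊆ F → Δ G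

/-- The faces of cardinality `n` of a family `Δ` (faces of card `n` are the
`(n-1)`-dimensional simplices). -/
def Faces {V : Type} (Δ : Finset V → Prop) (n : ℕ) : Type :=
  {F : Finset V // Δ F ∧ F.card = n}

/-- The simplicial boundary map of the (augmented) chain complex of `Δ` over
a field `k`, from chains on faces of card `n+1` to chains on faces of card `n`,
with signs determined by a linear order on the vertices. -/
def cxBoundary {V : Type} (k : Type) [Field k] [LinearOrder V]
    (Δ : Finset V → Prop) (n : ℕ) :
    (Faces Δ (n + 1) →₀ k) →ₗ[k] (Faces Δ n →₀ k) :=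
  Finsupp.lsum k fun F => LinearMap.toSpanSingleton k _
    (∑ x ∈ F.1.attach,
      ((-1 : k) ^ (F.1.filter (fun z => z < x.1)).card) •
        (if h : Δ (F.1.erase x.1) ∧ (F.1.erase x.1).card = n then
          Finsupp.single (⟨F.1.erase x.1, h⟩ : Faces Δ n) (1 : k) else 0))

/-- Cycles in chain degree `j` (faces of card `j`); in the bottom degree every
chain is a cycle (augmented complex). -/
def cxCycles {V : Type} (k : Type) [Field k] [LinearOrder V]
    (Δ : Finset V → Prop) : (j : ℕ) → Submodule k (Faces Δ j →₀ k)
  | 0 => ⊤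
  | (n + 1) => LinearMap.ker (cxBoundary k Δ n)

/-- Nonvanishing of the reduced homology `H̃_{j-1}(Δ; k)`: there is a cycle
supported on faces of cardinality `j` that is not a boundary. -/
def HNontrivial {V : Type} (k : Type) [Field k] [LinearOrder V]
    (Δ : Finset V → Prop) (j : ℕ) : Prop :=
  ¬ (cxCycles k Δ j ≤ LinearMap.range (cxBoundary k Δ j))

/-- The induced subcomplex `Δ[S]` on a set `S` of vertices. -/
def restrictC {V : Type} (Δ : Finset V → Prop) (S : Set V) : Finset V → Prop :=
  fun F => ↑F ⊆ S ∧ Δ F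

/-- The Castelnuovo–Mumford regularity of `Δ` over the field `k`:
the largest `j` such that `H̃_{j-1}(Δ[S]; k) ≠ 0` for some subset `S` of the
vertices. -/
def regC {V : Type} [Fintype V] (k : Type) [Field k] (Δ : Finset V → Prop) : ℕ :=
  letI : LinearOrder V :=
    LinearOrder.lift' (Fintype.equivFin V) (Fintype.equivFin V).injective
  sSup {j : ℕ | ∃ S : Set V, HNontrivial k (restrictC Δ S) j}

/-- The deletion `del_Δ(x)`. -/
def delC {V : Type} (Δ : Finset V → Prop) (x : V) : Finset V → Prop :=
  fun F => Δ F ∧ x ∉ F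

/-- The link `lk_Δ(x)`. -/
def lkC {V : Type} (Δ : Finset V → Prop) (x : V) : Finset V → Prop :=
  fun F => x ∉ F ∧ Δ (insert x F)

/-! ## Independence complexes and regularity of graphs -/

/-- The independence complex of a graph, as a family of finsets. -/
def indepFaces {V : Type} (G : SimpleGraph V) : Finset V → Prop :=
  fun F => ∀ u ∈ F, ∀ v ∈ F, ¬ G.Adj u v

/-- The regularity `reg(G)` of a graph: the regularity of its independence
complex over `k`. -/
def gReg {V : Type} [Fintype V] (k : Type) [Field k] (G : SimpleGraph V) : ℕ :=
  regC k (indepFaces G)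

/-- The regularity of the subgraph of `G` induced on the vertex set `S`. -/
def gRegOn {V : Type} [Fintype V] (k : Type) [Field k] (G : SimpleGraph V)
    (S : Set V) : ℕ :=
  regC k (restrictC (indepFaces G) S)

/-! ## Geometric realization, suspension, wedge -/

/-- The geometric realization of a family of finsets `Δ` on a finite vertex
type: convex combinations of vertices supported on a face. -/
abbrev cxSpace {V : Type} [Fintype V] (Δ : Finset V → Prop) : Type :=
  {f : V → ℝ // (∃ F : Finset V, Δ F ∧ ∀ v, f v ≠ 0 → v ∈ F) ∧
    (∀ v, 0 ≤ f v) ∧ ∑ v, f v = 1}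

/-- Relation generating the unreduced suspension: the two ends of the cylinder
are collapsed to two (always present) poles. -/
def suspRel (X : Type) : (X × unitInterval ⊕ Bool) → (X × unitInterval ⊕ Bool) → Prop
  | Sum.inl (x, t), Sum.inr b => (t = 0 ∧ b = false) ∨ (t = 1 ∧ b = true)
  | _, _ => False

/-- The unreduced suspension `Σ X` (the join of `X` with a two-point space). -/
abbrev Susp (X : Type) [TopologicalSpace X] : Type := Quot (suspRel X)

/-- Relation generating the wedge sum with respect to chosen basepoints. -/
def wedgeRel (X Y : Type) (x₀ : X) (y₀ : Y) : X ⊕ Y → X ⊕ Y → Prop :=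
  fun p q => p = Sum.inl x₀ ∧ q = Sum.inr y₀

/-- The wedge sum `X ∨ Y` with respect to chosen basepoints. -/
abbrev Wedge (X Y : Type) [TopologicalSpace X] [TopologicalSpace Y]
    (x₀ : X) (y₀ : Y) : Type := Quot (wedgeRel X Y x₀ y₀)

/-! ## Graph invariants -/

/-- `M` is an induced matching of `G`: a set of edges, pairwise with distinct
endpoints and with no edge of `G` between the endpoints of distinct members. -/
def IsInducedMatching {V : Type} (G : SimpleGraph V) (M : Finset (V × V)) : Prop :=
  (∀ p ∈ M, G.Adj p.1 p.2) ∧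
    ∀ p ∈ M, ∀ q ∈ M, p ≠ q →
      p.1 ≠ q.1 ∧ p.1 ≠ q.2 ∧ p.2 ≠ q.1 ∧ p.2 ≠ q.2 ∧
      ¬ G.Adj p.1 q.1 ∧ ¬ G.Adj p.1 q.2 ∧ ¬ G.Adj p.2 q.1 ∧ ¬ G.Adj p.2 q.2

/-- The induced matching number `im(G)`. -/
def inducedMatchingNumber {V : Type} (G : SimpleGraph V) : ℕ :=
  sSup {n : ℕ | ∃ M : Finset (V × V), IsInducedMatching G M ∧ M.card = n}

/-- The independence number `α(G)`. -/
def indepNumber {V : Type} (G : SimpleGraph V) : ℕ :=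
  sSup {n : ℕ | ∃ s : Finset V, (∀ u ∈ s, ∀ v ∈ s, ¬ G.Adj u v) ∧ s.card = n}

/-- The decycling number `∇(G)`: the least size of a set of vertices whose
removal leaves an acyclic graph. -/
def decyclingNumber {V : Type} [Fintype V] (G : SimpleGraph V) : ℕ :=
  sInf {n : ℕ | ∃ D : Finset V, D.card = n ∧
    (G.induce {v : V | v ∉ D}).IsAcyclic}

/-- `K` contains an induced cycle on `n` vertices. -/
def HasInducedCycle {V : Type} (K : SimpleGraph V) (n : ℕ) : Prop :=
  ∃ f : Fin n ↪ V, ∀ i j : Fin n,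
    K.Adj (f i) (f j) ↔ ((j : ℕ) = ((i : ℕ) + 1) % n ∨ (i : ℕ) = ((j : ℕ) + 1) % n)

/-- A graph is cochordal if its complement is chordal, i.e. the complement has
no induced cycle of length at least `4`. -/
def Cochordal {V : Type} (H : SimpleGraph V) : Prop :=
  ∀ n : ℕ, 4 ≤ n → ¬ HasInducedCycle Hᶜ n

/-- The cochordal cover number `cochord(G)`: the least number of cochordal
subgraphs of `G` whose edge sets cover the edges of `G`. -/
def cochordCover {V : Type} (G : SimpleGraph V) : ℕ :=
  sInf {r : ℕ | ∃ H : Fin r → SimpleGraph V,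
    (∀ i, H i ≤ G ∧ Cochordal (H i)) ∧ ∀ u v, G.Adj u v → ∃ i, (H i).Adj u v}

/-- The graph `G*` on the edge set of `G`: two edges are adjacent iff the
subgraph induced by their endpoints is `2K₂` (disjoint, with no cross edges). -/
def starGraph {V : Type} (G : SimpleGraph V) : SimpleGraph G.edgeSet :=
  SimpleGraph.fromRel fun e f =>
    ∀ a ∈ (e.1 : Sym2 V), ∀ b ∈ (f.1 : Sym2 V), a ≠ b ∧ ¬ G.Adj a b

/-- The chromatic number, as a natural number. -/
def chromNum {W : Type} (H : SimpleGraph W) : ℕ :=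
  sInf {n : ℕ | ∃ c : W → Fin n, ∀ u v, H.Adj u v → c u ≠ c v}

/-- The clique number `ω`. -/
def cliqueNum {W : Type} (H : SimpleGraph W) : ℕ :=
  sSup {n : ℕ | ∃ s : Finset W, H.IsNClique n s}

/-- A graph is perfect if every induced subgraph has chromatic number equal to
its clique number. -/
def IsPerfect {W : Type} (H : SimpleGraph W) : Prop :=
  ∀ A : Set W, chromNum (H.induce A) = cliqueNum (H.induce A)

/-! ## Lozin transform, triple subdivision, whiskers -/

/-- Generating relation for the Lozin transform `L_x(G; Y, Z)`: delete `x`,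
add the path `y(=0) - a(=1) - b(=2) - z(=3)` on four new vertices, join `y`
to every vertex of `Y` and `z` to every vertex of `Z`. -/
def lozinRel {V : Type} (G : SimpleGraph V) (x : V) (Y Z : Set V) :
    ({w : V // w ≠ x} ⊕ Fin 4) → ({w : V // w ≠ x} ⊕ Fin 4) → Prop
  | Sum.inl u, Sum.inl w => G.Adj u.1 w.1
  | Sum.inl u, Sum.inr i => (i = 0 ∧ u.1 ∈ Y) ∨ (i = 3 ∧ u.1 ∈ Z)
  | Sum.inr i, Sum.inr j => (i : ℕ) + 1 = (j : ℕ)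
  | _, _ => False

/-- The Lozin transform `L_x(G; Y, Z)` of `G` at the vertex `x`. -/
def lozinModel {V : Type} (G : SimpleGraph V) (x : V) (Y Z : Set V) :
    SimpleGraph ({w : V // w ≠ x} ⊕ Fin 4) :=
  SimpleGraph.fromRel (lozinRel G x Y Z)

/-- `{Y, Z}` is a partition of the open neighborhood of `x`. -/
def IsLozinPartition {V : Type} (G : SimpleGraph V) (x : V) (Y Z : Set V) : Prop :=
  Y ∪ Z = G.neighborSet x ∧ Disjoint Y Z

/-- Generating relation for the triple subdivision of the edge `(u,v)`:
the edge `uv` is removed and replaced by the path `u - y(=0) - a(=1) - b(=2) - v`. -/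
def tripleSubRel {V : Type} (G : SimpleGraph V) (u v : V) :
    (V ⊕ Fin 3) → (V ⊕ Fin 3) → Prop
  | Sum.inl a, Sum.inl b => G.Adj a b ∧ ¬(a = u ∧ b = v) ∧ ¬(a = v ∧ b = u)
  | Sum.inl a, Sum.inr i => (a = u ∧ i = 0) ∨ (a = v ∧ i = 2)
  | Sum.inr i, Sum.inr j => (i : ℕ) + 1 = (j : ℕ)
  | _, _ => False

/-- The triple subdivision `L(G; e)` of `G` at the edge `e = (u,v)`. -/
def tripleSub {V : Type} (G : SimpleGraph V) (u v : V) : SimpleGraph (V ⊕ Fin 3) :=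
  SimpleGraph.fromRel (tripleSubRel G u v)

/-- Generating relation for the whisker `W_S(G)`: attach a new pendant vertex
to each vertex of `S`. -/
def whiskerSRel {V : Type} (G : SimpleGraph V) (S : Finset V) :
    (V ⊕ {s : V // s ∈ S}) → (V ⊕ {s : V // s ∈ S}) → Prop
  | Sum.inl a, Sum.inl b => G.Adj a b
  | Sum.inl a, Sum.inr s => a = s.1
  | _, _ => False

/-- The whisker graph `W_S(G)` on `V ⊕ S`. -/
def whiskerS {V : Type} (G : SimpleGraph V) (S : Finset V) :
    SimpleGraph (V ⊕ {s : V // s ∈ S}) :=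
  SimpleGraph.fromRel (whiskerSRel G S)

/-- Generating relation for the full whisker `W(G)`: attach a pendant vertex
to every vertex. -/
def whiskerRel {V : Type} (G : SimpleGraph V) : (V ⊕ V) → (V ⊕ V) → Prop
  | Sum.inl a, Sum.inl b => G.Adj a b
  | Sum.inl a, Sum.inr b => a = b
  | _, _ => False

/-- The full whisker graph `W(G)` on `V ⊕ V`. -/
def whiskerGraph {V : Type} (G : SimpleGraph V) : SimpleGraph (V ⊕ V) :=
  SimpleGraph.fromRel (whiskerRel G)

/-! ## Vertex decomposability -/

/-- The closed neighborhood of `x` inside the finset `A`. -/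
def closedNbrOn {V : Type} (G : SimpleGraph V) (A : Finset V) (x : V) : Finset V :=
  A.filter fun z => z = x ∨ G.Adj x z

/-- `T` is an independent set of `G`. -/
def IsIndepFinset {V : Type} (G : SimpleGraph V) (T : Finset V) : Prop :=
  ∀ u ∈ T, ∀ v ∈ T, ¬ G.Adj u v

/-- `x` is a shedding vertex of the induced subgraph `G[A]`. -/
def IsSheddingOn {V : Type} (G : SimpleGraph V) (A : Finset V) (x : V) : Prop :=
  ∀ T ⊆ A \ closedNbrOn G A x, IsIndepFinset G T →
    ∃ w ∈ A, G.Adj x w ∧ IsIndepFinset G (insert w T)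

/-- Vertex decomposability of the induced subgraph `G[A]`. -/
def VDOn {V : Type} (G : SimpleGraph V) : Finset V → Prop := fun A =>
  (∀ u ∈ A, ∀ v ∈ A, ¬ G.Adj u v) ∨
    ∃ x : {y : V // y ∈ A}, IsSheddingOn G A x.1 ∧
      VDOn G (A.erase x.1) ∧ VDOn G (A \ closedNbrOn G A x.1)
termination_by A => A.card
decreasing_by
  · exact Finset.card_erase_lt_of_mem x.2
  · refine Finset.card_lt_card ?_
    refine (Finset.ssubset_iff_of_subset Finset.sdiff_subset).2 ⟨x.1, x.2, ?_⟩
    simp [closedNbrOn, x.2]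

end

/-! A graph is a forest iff each of its edges is a bridge, and a bridge `x'y'` of `K` pulls back
to a bridge `xy` of `H` along any map that sends `x, y` to the two sides of `x'y'` and joins the
images of every other edge of `H` in `K` without `x'y'`. Contracting the new path onto `uv`, so
that any chosen edge of the path becomes `uv` and the others collapse, pulls the bridges of `G`
back to `L(G;e)`; the inclusion of `G`, with `uv` replaced by the path, pulls them the other way.
So subdividing `uv` preserves acyclicity in both directions and a decycling set of `G` is one of
`L(G;e)`. A decycling set of `L(G;e)` that meets the path trades that vertex for `u`, and one that
contains `u` or `v` already breaks every cycle through `uv`. -/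

open SimpleGraph Sum

namespace SimpleGraph

variable {A B : Type*}

theorem Reachable.lift {H : SimpleGraph A} {K : SimpleGraph B} (f : A → B)
    (hf : ∀ ⦃p q⦄, H.Adj p q → K.Reachable (f p) (f q)) {a b : A} (h : H.Reachable a b) :
    K.Reachable (f a) (f b) := by
  rw [reachable_iff_reflTransGen] at h ⊢
  exact h.lift' f fun p q hpq => (reachable_iff_reflTransGen _ _).mp (hf hpq)

theorem reachable_comp_of_sym2_eq {K : SimpleGraph B} (f : A → B) {p q p' q' : A}
    (he : s(p, q) = s(p', q')) (h : K.Reachable (f p') (f q')) : K.Reachable (f p) (f q) := by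
  rcases Sym2.eq_iff.mp he with ⟨rfl, rfl⟩ | ⟨rfl, rfl⟩
  exacts [h, h.symm]

theorem IsBridge.of_reachable_lift {H : SimpleGraph A} {K : SimpleGraph B} (f : A → B)
    {x y : A} {x' y' : B} (hb : K.IsBridge s(x', y'))
    (hx : (K.deleteEdges {s(x', y')}).Reachable x' (f x))
    (hy : (K.deleteEdges {s(x', y')}).Reachable (f y) y')
    (hf : ∀ ⦃p q⦄, H.Adj p q → s(p, q) ≠ s(x, y) →
      (K.deleteEdges {s(x', y')}).Reachable (f p) (f q)) :
    H.IsBridge s(x, y) := by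
  rw [isBridge_iff] at hb ⊢
  refine fun h => hb (hx.trans ((h.lift f fun p q hpq => ?_).trans hy))
  rw [deleteEdges_adj, Set.mem_singleton_iff] at hpq
  exact hf hpq.1 hpq.2

theorem IsAcyclic.map {G : SimpleGraph A} (f : A ↪ B) (hG : G.IsAcyclic) :
    (G.map f).IsAcyclic := by
  rw [isAcyclic_iff_forall_adj_isBridge] at hG ⊢
  intro _ _ hxy
  obtain ⟨a, b, hab, rfl, rfl⟩ := (map_adj _ _ _ _).mp hxy
  have : Nonempty A := ⟨a⟩
  have hinv : ∀ p, Function.invFun f (f p) = p := Function.leftInverse_invFun f.injective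
  refine (hG hab).of_reachable_lift (Function.invFun f) (by rw [hinv]) (by rw [hinv]) ?_
  intro _ _ hpq' hne
  obtain ⟨p, q, hpq, rfl, rfl⟩ := (map_adj _ _ _ _).mp hpq'
  rw [hinv, hinv]
  refine Adj.reachable (deleteEdges_adj.mpr ⟨hpq, fun he => hne ?_⟩)
  rw [Set.mem_singleton_iff] at he
  simpa using congrArg (Sym2.map f) he

theorem spanningCoe_induce_adj {G : SimpleGraph A} {S : Set A} {a b : A} :
    (G.induce S).spanningCoe.Adj a b ↔ G.Adj a b ∧ a ∈ S ∧ b ∈ S := by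
  simp

end SimpleGraph

section TripleSub

variable {V : Type} {G : SimpleGraph V} {u v : V}

@[simp]
theorem tripleSub_adj_inl_inl {a b : V} :
    (tripleSub G u v).Adj (inl a) (inl b) ↔ G.Adj a b ∧ s(a, b) ≠ s(u, v) := by
  simp only [tripleSub, fromRel_adj, tripleSubRel, ne_eq, inl.injEq, Sym2.eq_iff]
  constructor
  · rintro ⟨-, h | h⟩ <;> exact ⟨by grind [G.adj_symm], by tauto⟩
  · rintro ⟨h, hne⟩
    exact ⟨h.ne, Or.inl ⟨h, by tauto⟩⟩

@[simp]
theorem tripleSub_adj_inl_inr {a : V} {i : Fin 3} :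
    (tripleSub G u v).Adj (inl a) (inr i) ↔ a = u ∧ i = 0 ∨ a = v ∧ i = 2 := by
  simp [tripleSub, tripleSubRel]

@[simp]
theorem tripleSub_adj_inr_inl {a : V} {i : Fin 3} :
    (tripleSub G u v).Adj (inr i) (inl a) ↔ a = u ∧ i = 0 ∨ a = v ∧ i = 2 := by
  rw [adj_comm, tripleSub_adj_inl_inr]

@[simp]
theorem tripleSub_adj_inr_inr {i j : Fin 3} :
    (tripleSub G u v).Adj (inr i) (inr j) ↔ (i : ℕ) + 1 = j ∨ (j : ℕ) + 1 = i := by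
  simp only [tripleSub, fromRel_adj, tripleSubRel, ne_eq, inr.injEq]
  constructor
  · exact fun h => h.2
  · exact fun h => ⟨by rintro rfl; omega, h⟩

theorem tripleSub_mono {G' : SimpleGraph V} (hle : G ≤ G') :
    tripleSub G u v ≤ tripleSub G' u v := by
  rintro (a | i) (b | j) hadj
  · rw [tripleSub_adj_inl_inl] at hadj ⊢
    exact ⟨hle hadj.1, hadj.2⟩
  all_goals simpa using hadj

variable (u v) in
def tripleSubPath : ℕ → V ⊕ Fin 3
  | 0 => inl u
  | 1 => inr 0
  | 2 => inr 1
  | 3 => inr 2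
  | _ => inl v

theorem tripleSub_adj_tripleSubPath {i : ℕ} (hi : i < 4) :
    (tripleSub G u v).Adj (tripleSubPath u v i) (tripleSubPath u v (i + 1)) := by
  interval_cases i <;> simp [tripleSubPath]

theorem tripleSubPath_edge_injective {i j : ℕ} (hi : i < 4) (hj : j < 4)
    (h : s(tripleSubPath u v i, tripleSubPath u v (i + 1)) =
      s(tripleSubPath u v j, tripleSubPath u v (j + 1))) : i = j := by
  interval_cases i <;> interval_cases j <;> simp_all [tripleSubPath]

theorem tripleSubPath_edge_ne_inl {i : ℕ} (hi : i < 4) (a b : V) :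
    s(tripleSubPath u v i, tripleSubPath u v (i + 1)) ≠ s(inl a, inl b) := by
  interval_cases i <;> simp [tripleSubPath]

theorem tripleSub_adj_cases {x y : V ⊕ Fin 3} (h : (tripleSub G u v).Adj x y) :
    (∃ a b, G.Adj a b ∧ s(a, b) ≠ s(u, v) ∧ s(x, y) = s(inl a, inl b)) ∨
      ∃ i < 4, s(x, y) = s(tripleSubPath u v i, tripleSubPath u v (i + 1)) := by
  rcases x with a | i <;> rcases y with b | j
  · exact Or.inl ⟨a, b, (tripleSub_adj_inl_inl.mp h).1, (tripleSub_adj_inl_inl.mp h).2, rfl⟩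
  · right
    rcases tripleSub_adj_inl_inr.mp h with ⟨rfl, rfl⟩ | ⟨rfl, rfl⟩
    exacts [⟨0, by norm_num, rfl⟩, ⟨3, by norm_num, Sym2.eq_swap⟩]
  · right
    rcases tripleSub_adj_inr_inl.mp h with ⟨rfl, rfl⟩ | ⟨rfl, rfl⟩
    exacts [⟨0, by norm_num, Sym2.eq_swap⟩, ⟨3, by norm_num, rfl⟩]
  · right
    rw [tripleSub_adj_inr_inr] at h
    fin_cases i <;> fin_cases j <;> simp at h
    exacts [⟨1, by norm_num, rfl⟩, ⟨1, by norm_num, Sym2.eq_swap⟩, ⟨2, by norm_num, rfl⟩,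
      ⟨2, by norm_num, Sym2.eq_swap⟩]

theorem reachable_tripleSubPath {s : Set (Sym2 (V ⊕ Fin 3))} {i j : ℕ} (hij : i ≤ j) (hj : j ≤ 4)
    (hs : ∀ l, i ≤ l → l < j → s(tripleSubPath u v l, tripleSubPath u v (l + 1)) ∉ s) :
    ((tripleSub G u v).deleteEdges s).Reachable (tripleSubPath u v i) (tripleSubPath u v j) := by
  induction j, hij using Nat.le_induction with
  | base => rfl
  | succ j hij ih =>
    refine (ih (by omega) fun l hil hlj => hs l hil (by omega)).trans (Adj.reachable ?_)
    exact deleteEdges_adj.mpr ⟨tripleSub_adj_tripleSubPath (by omega), hs j hij (by omega)⟩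

variable (u v) in
/-- Sends the path vertices before position `k` to `u` and the others to `v`: the `k`-th edge of
`tripleSubPath u v` becomes `uv` and the other path edges collapse. -/
def contractPath (k : ℕ) : V ⊕ Fin 3 → V :=
  Sum.elim id fun i => if (i : ℕ) < k then u else v

theorem contractPath_tripleSubPath {i k : ℕ} (hk : k < 4) :
    contractPath u v k (tripleSubPath u v i) = if i ≤ k then u else v := by
  rcases i with _ | _ | _ | _ | i <;> interval_cases k <;> simp [contractPath, tripleSubPath]

theorem isAcyclic_tripleSub (h : G.Adj u v) (hG : G.IsAcyclic) :
    (tripleSub G u v).IsAcyclic := by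
  have hbridge := isAcyclic_iff_forall_adj_isBridge.mp hG
  rw [isAcyclic_iff_forall_adj_isBridge]
  intro x y hxy
  rcases tripleSub_adj_cases hxy with ⟨a, b, hab, habuv, he⟩ | ⟨k, hk, he⟩
  · -- with `k = 0` the first path edge is mapped onto `uv ≠ ab` and the others collapse
    rw [he]
    refine (hbridge hab).of_reachable_lift (contractPath u v 0) .rfl .rfl fun p q hpq hne => ?_
    rcases tripleSub_adj_cases hpq with ⟨c, d, hcd, -, he'⟩ | ⟨i, -, he'⟩
    · refine reachable_comp_of_sym2_eq _ he' (Adj.reachable (deleteEdges_adj.mpr ⟨hcd, ?_⟩))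
      rintro hcdab
      exact hne (he'.trans (by simpa [contractPath] using Set.mem_singleton_iff.mp hcdab))
    · refine reachable_comp_of_sym2_eq _ he' ?_
      rw [contractPath_tripleSubPath (by omega), contractPath_tripleSubPath (by omega)]
      rcases Nat.eq_zero_or_pos i with rfl | hi0
      · exact Adj.reachable (deleteEdges_adj.mpr ⟨h, habuv.symm⟩)
      · simp only [show ¬ i ≤ 0 by omega, show ¬ i + 1 ≤ 0 by omega, if_false]
        rfl
  · -- the `k`-th path edge is the only edge mapped onto `uv`
    rw [he]
    refine (hbridge h).of_reachable_lift (contractPath u v k)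
      (by rw [contractPath_tripleSubPath hk, if_pos le_rfl])
      (by rw [contractPath_tripleSubPath hk, if_neg (by omega)])
      fun p q hpq hne => ?_
    rcases tripleSub_adj_cases hpq with ⟨c, d, hcd, hcduv, he'⟩ | ⟨i, -, he'⟩
    · exact reachable_comp_of_sym2_eq _ he' (Adj.reachable (deleteEdges_adj.mpr ⟨hcd, hcduv⟩))
    · have hik : i ≠ k := by rintro rfl; exact hne he'
      refine reachable_comp_of_sym2_eq _ he' ?_
      rw [contractPath_tripleSubPath hk, contractPath_tripleSubPath hk]
      by_cases hik' : i < k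
      · simp only [if_pos hik'.le, if_pos (show i + 1 ≤ k by omega)]
        rfl
      · simp only [if_neg (show ¬ i ≤ k by omega), if_neg (show ¬ i + 1 ≤ k by omega)]
        rfl

theorem isAcyclic_of_tripleSub (hT : (tripleSub G u v).IsAcyclic) : G.IsAcyclic := by
  have hbridge := isAcyclic_iff_forall_adj_isBridge.mp hT
  -- `uv` inherits the bridge property of the first path edge `u y`
  have huv : G.IsBridge s(u, v) := by
    refine (hbridge (tripleSub_adj_tripleSubPath (G := G) (u := u) (v := v) (i := 0)
      (by norm_num))).of_reachable_lift inl .rfl ?_ fun p q hpq hne => ?_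
    · refine (reachable_tripleSubPath (i := 1) (j := 4) (by norm_num) le_rfl
        fun l hl hl4 he => ?_).symm
      rw [Set.mem_singleton_iff] at he
      have := tripleSubPath_edge_injective (by omega) (by norm_num) he
      omega
    · refine Adj.reachable (deleteEdges_adj.mpr
        ⟨tripleSub_adj_inl_inl.mpr ⟨hpq, hne⟩, fun he => ?_⟩)
      exact tripleSubPath_edge_ne_inl (by norm_num) p q (Set.mem_singleton_iff.mp he).symm
  rw [isAcyclic_iff_forall_adj_isBridge]
  intro a b hab
  by_cases habuv : s(a, b) = s(u, v)
  · rwa [habuv]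
  refine (hbridge (tripleSub_adj_inl_inl.mpr ⟨hab, habuv⟩)).of_reachable_lift inl .rfl .rfl
    fun p q hpq hne => ?_
  by_cases hpquv : s(p, q) = s(u, v)
  · refine reachable_comp_of_sym2_eq inl hpquv
      (reachable_tripleSubPath (i := 0) (j := 4) (by norm_num) le_rfl fun l _ hl he => ?_)
    exact tripleSubPath_edge_ne_inl hl a b (Set.mem_singleton_iff.mp he)
  · refine Adj.reachable (deleteEdges_adj.mpr
      ⟨tripleSub_adj_inl_inl.mpr ⟨hpq, hpquv⟩, fun he => hne ?_⟩)
    simpa using Set.mem_singleton_iff.mp he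

theorem spanningCoe_induce_tripleSub_le (S' : Set (V ⊕ Fin 3)) :
    ((tripleSub G u v).induce S').spanningCoe ≤
      tripleSub (G.induce (inl ⁻¹' S')).spanningCoe u v := by
  rintro (a | i) (b | j) hadj <;> rw [spanningCoe_induce_adj] at hadj
  · rw [tripleSub_adj_inl_inl] at hadj ⊢
    exact ⟨spanningCoe_induce_adj.mpr ⟨hadj.1.1, hadj.2⟩, hadj.1.2⟩
  all_goals simpa using hadj.1

theorem tripleSub_le_spanningCoe_induce {S' : Set (V ⊕ Fin 3)} (hu : inl u ∈ S')
    (hv : inl v ∈ S') (hpath : ∀ i, inr i ∈ S') :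
    tripleSub (G.induce (inl ⁻¹' S')).spanningCoe u v ≤
      ((tripleSub G u v).induce S').spanningCoe := by
  rintro (a | i) (b | j) hadj <;> rw [spanningCoe_induce_adj]
  · rw [tripleSub_adj_inl_inl, spanningCoe_induce_adj] at hadj
    exact ⟨tripleSub_adj_inl_inl.mpr ⟨hadj.1.1, hadj.2⟩, hadj.1.2⟩
  · rw [tripleSub_adj_inl_inr] at hadj
    refine ⟨tripleSub_adj_inl_inr.mpr hadj, ?_, hpath j⟩
    rcases hadj with ⟨rfl, -⟩ | ⟨rfl, -⟩ <;> assumption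
  · rw [tripleSub_adj_inr_inl] at hadj
    refine ⟨tripleSub_adj_inr_inl.mpr hadj, hpath i, ?_⟩
    rcases hadj with ⟨rfl, -⟩ | ⟨rfl, -⟩ <;> assumption
  · exact ⟨by simpa using hadj, hpath i, hpath j⟩

theorem isAcyclic_induce_tripleSub (h : G.Adj u v) {D : Finset V}
    (hD : (G.induce {a | a ∉ D}).IsAcyclic) :
    ((tripleSub G u v).induce {x | x ∉ D.image inl}).IsAcyclic := by
  set S' : Set (V ⊕ Fin 3) := {x | x ∉ D.image inl}
  have hS : (G.induce (inl ⁻¹' S')).IsAcyclic := by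
    rwa [show inl ⁻¹' S' = {a | a ∉ D} by ext; simp [S']]
  set K := (G.induce (inl ⁻¹' S')).spanningCoe
  have hK : (K ⊔ edge u v).IsAcyclic := by
    refine isAcyclic_sup_fromEdgeSet_iff.mpr ⟨hS.map _, fun hr => ?_⟩
    by_cases huv : u ∈ inl ⁻¹' S' ∧ v ∈ inl ⁻¹' S'
    · exact Or.inr (spanningCoe_induce_adj.mpr ⟨h, huv⟩)
    · refine Or.inl (by_contra fun hne => huv ⟨?_, ?_⟩)
      · obtain ⟨w, -, rfl⟩ := (support_spanningCoe _).subset (mem_support_of_reachable hne hr)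
        exact w.2
      · obtain ⟨w, -, rfl⟩ := (support_spanningCoe _).subset
          (mem_support_of_reachable (Ne.symm hne) hr.symm)
        exact w.2
  refine IsAcyclic.of_map (Function.Embedding.subtype _) ?_
  refine (isAcyclic_tripleSub (Or.inr ((edge_adj ..).mpr ⟨Or.inl ⟨rfl, rfl⟩, h.ne⟩)) hK).anti
    ((spanningCoe_induce_tripleSub_le S').trans (tripleSub_mono le_sup_left))

theorem isAcyclic_induce_of_tripleSub {S : Set V} {S' : Set (V ⊕ Fin 3)}
    (hSS' : ∀ a ∈ S, inl a ∈ S') (huv : u ∉ S ∨ v ∉ S)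
    (hT : ((tripleSub G u v).induce S').IsAcyclic) : (G.induce S).IsAcyclic := by
  refine hT.comap ⟨fun a => ⟨inl a.1, hSS' a.1 a.2⟩, fun {a b} hab => ?_⟩
    fun a b hab => Subtype.ext (inl_injective (congrArg Subtype.val hab))
  refine tripleSub_adj_inl_inl.mpr ⟨hab, fun he => ?_⟩
  rcases Sym2.eq_iff.mp he with ⟨ha, hb⟩ | ⟨ha, hb⟩ <;>
    rcases huv with huv | huv <;> grind

theorem exists_isAcyclic_induce_of_tripleSub {D' : Finset (V ⊕ Fin 3)}
    (hD' : ((tripleSub G u v).induce {x | x ∉ D'}).IsAcyclic) :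
    ∃ D : Finset V, D.card ≤ D'.card ∧ (G.induce {a | a ∉ D}).IsAcyclic := by
  by_cases hpath : ∃ i, inr i ∈ D'
  · obtain ⟨i, hi⟩ := hpath
    refine ⟨insert u D'.toLeft, ?_, isAcyclic_induce_of_tripleSub (fun a ha => ?_)
      (Or.inl (by simp)) hD'⟩
    · have : 0 < D'.toRight.card := Finset.card_pos.mpr ⟨i, Finset.mem_toRight.mpr hi⟩
      have := D'.card_toLeft_add_card_toRight
      have := Finset.card_insert_le u D'.toLeft
      omega
    · simp_all
  push Not at hpath
  refine ⟨D'.toLeft, Finset.card_toLeft_le, ?_⟩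
  by_cases huv : inl u ∈ D' ∨ inl v ∈ D'
  · exact isAcyclic_induce_of_tripleSub (by simp) (by simpa using huv) hD'
  push Not at huv
  have hS : {a | a ∉ D'.toLeft} = inl ⁻¹' {x | x ∉ D'} := by ext; simp
  rw [hS]
  exact (isAcyclic_of_tripleSub ((hD'.map _).anti
    (tripleSub_le_spanningCoe_induce (S' := {x | x ∉ D'}) huv.1 huv.2 hpath))).of_map _

theorem decyclingNumber_le [Fintype V] {D : Finset V}
    (hD : (G.induce {a | a ∉ D}).IsAcyclic) : decyclingNumber G ≤ D.card :=
  Nat.sInf_le ⟨D, rfl, hD⟩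

theorem exists_isAcyclic_card_eq_decyclingNumber [Fintype V] (G : SimpleGraph V) :
    ∃ D : Finset V, D.card = decyclingNumber G ∧ (G.induce {a | a ∉ D}).IsAcyclic :=
  Nat.sInf_mem (s := {n | ∃ D : Finset V, D.card = n ∧ (G.induce {a | a ∉ D}).IsAcyclic})
    ⟨_, Finset.univ, rfl, fun x => absurd (Finset.mem_univ x.1) x.2⟩

end TripleSub

/-- Triple subdivision of an edge preserves the decycling
number: `∇(L(G; e)) = ∇(G)`. -/
theorem decyclingNumber_tripleSub {V : Type} [Fintype V] (G : SimpleGraph V)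
    (u v : V) (h : G.Adj u v) :
    decyclingNumber (tripleSub G u v) = decyclingNumber G := by
  apply le_antisymm
  · obtain ⟨D, hcard, hD⟩ := exists_isAcyclic_card_eq_decyclingNumber G
    calc decyclingNumber (tripleSub G u v) ≤ (D.image inl).card :=
          decyclingNumber_le (isAcyclic_induce_tripleSub h hD)
      _ = decyclingNumber G := by rw [Finset.card_image_of_injective _ inl_injective, hcard]
  · obtain ⟨D', hcard, hD'⟩ := exists_isAcyclic_card_eq_decyclingNumber (tripleSub G u v)
    obtain ⟨D, hle, hD⟩ := exists_isAcyclic_induce_of_tripleSub hD'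
    exact (decyclingNumber_le hD).trans (hle.trans hcard.le)
end

section
/- Let G be a graph and S a decycling set of G (i.e., G − S is a forest). Then the partial whisker graph W_S(G), obtained from G by attaching a new pendant vertex to each vertex of S, is vertex decomposable. -/
open scoped Classical

/-!
Induct over vertex sets `A` of `W_S(G)`, with the invariant that the base vertices of `A` whose
whisker is not in `A` induce a forest in `G`. A vertex `x` with a neighbour `w` such that
`N[w] ⊆ N[x]` is a shedding vertex, and such a pair always exists when `W_S(G)[A]` has an edge:
either some `s ∈ A` has its whisker `s'` in `A`, and `w = s'`, `x = s`; or every edge lies in the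
forest, and `w` is a leaf of it, `x` its neighbour. In both cases `x` is a base vertex, so removing
`x` or `N[x]` removes a whisker only together with its base vertex and keeps the invariant.
-/

section VertexDecomposable

variable {V : Type} (G : SimpleGraph V)

lemma self_mem_closedNbrOn {A : Finset V} {x : V} (hx : x ∈ A) : x ∈ closedNbrOn G A x :=
  Finset.mem_filter.mpr ⟨hx, Or.inl rfl⟩

lemma card_sdiff_closedNbrOn_lt {A : Finset V} {x : V} (hx : x ∈ A) :
    (A \ closedNbrOn G A x).card < A.card :=
  Finset.card_lt_card <|
    Finset.sdiff_ssubset (Finset.filter_subset _ _) ⟨x, self_mem_closedNbrOn G hx⟩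

lemma isSheddingOn_of_adj_of_closedNbr_subset {A : Finset V} {x w : V} (hw : w ∈ A)
    (hxw : G.Adj x w) (hdom : ∀ z ∈ A, G.Adj w z → z = x ∨ G.Adj x z) :
    IsSheddingOn G A x := by
  intro T hT hT_indep
  have hT_far : ∀ t ∈ T, ¬ G.Adj w t := fun t ht hwt => by
    obtain ⟨htA, htN⟩ := Finset.mem_sdiff.mp (hT ht)
    exact htN (Finset.mem_filter.mpr ⟨htA, hdom t htA hwt⟩)
  refine ⟨w, hw, hxw, fun a ha b hb => ?_⟩
  rcases Finset.mem_insert.mp ha with rfl | haT <;> rcases Finset.mem_insert.mp hb with rfl | hbT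
  · exact G.loopless.irrefl _
  · exact hT_far b hbT
  · exact fun h => hT_far a haT h.symm
  · exact hT_indep a haT b hbT

theorem vdOn_of_forall_exists_adj_closedNbr_subset (P : Finset V → Prop)
    (hP : ∀ A, P A → ¬ IsIndepFinset G A → ∃ x ∈ A, ∃ w ∈ A, G.Adj x w ∧
      (∀ z ∈ A, G.Adj w z → z = x ∨ G.Adj x z) ∧
      P (A.erase x) ∧ P (A \ closedNbrOn G A x))
    (A : Finset V) (hA : P A) : VDOn G A := by
  rw [VDOn]
  by_cases hindep : IsIndepFinset G A
  · exact Or.inl hindep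
  obtain ⟨x, hx, w, hw, hxw, hdom, herase, hsdiff⟩ := hP A hA hindep
  exact Or.inr ⟨⟨x, hx⟩, isSheddingOn_of_adj_of_closedNbr_subset G hw hxw hdom,
    vdOn_of_forall_exists_adj_closedNbr_subset P hP _ herase,
    vdOn_of_forall_exists_adj_closedNbr_subset P hP _ hsdiff⟩
termination_by A.card
decreasing_by
  · exact Finset.card_erase_lt_of_mem hx
  · exact card_sdiff_closedNbrOn_lt G hx

end VertexDecomposable

lemma SimpleGraph.IsAcyclic.exists_adj_forall_adj_eq {W : Type} [Finite W]
    {H : SimpleGraph W} (hH : H.IsAcyclic) {a b : W} (hab : H.Adj a b) :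
    ∃ u v, H.Adj u v ∧ ∀ w, H.Adj u w → w = v := by
  have : Nonempty W := ⟨a⟩
  obtain ⟨u, v, p, hp, hmax⟩ := SimpleGraph.Walk.exists_isPath_forall_isPath_length_le_length H
  have hnil : ¬ p.Nil := SimpleGraph.Walk.not_nil_iff_lt_length.mpr <|
    hmax a b (.cons hab .nil) (by simp [hab.ne])
  refine ⟨u, p.snd, p.adj_snd hnil, fun w huw => hH.eq_snd_of_adj_start hp huw ?_⟩
  by_contra hw
  simpa using hmax _ _ (p.cons huw.symm) (hp.cons hw)

section Whisker

open Sum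

variable {V : Type} {G : SimpleGraph V} {S : Finset V}

@[simp]
lemma whiskerS_adj_inl_inl {u v : V} : (whiskerS G S).Adj (inl u) (inl v) ↔ G.Adj u v := by
  simp only [whiskerS, SimpleGraph.fromRel_adj, whiskerSRel, ne_eq, inl.injEq, G.adj_comm v u,
    or_self, and_iff_right_iff_imp]
  exact SimpleGraph.Adj.ne

@[simp]
lemma whiskerS_adj_inl_inr {u : V} {s : S} : (whiskerS G S).Adj (inl u) (inr s) ↔ u = s := by
  simp [whiskerS, whiskerSRel]

@[simp]
lemma whiskerS_adj_inr_inl {u : V} {s : S} : (whiskerS G S).Adj (inr s) (inl u) ↔ u = s := by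
  rw [SimpleGraph.adj_comm, whiskerS_adj_inl_inr]

@[simp]
lemma whiskerS_not_adj_inr_inr {s t : S} : ¬ (whiskerS G S).Adj (inr s) (inr t) := by
  simp [whiskerS, whiskerSRel]

variable (S) in
def unwhiskered (A : Finset (V ⊕ S)) : Set V :=
  {v | inl v ∈ A ∧ ∀ hv : v ∈ S, inr ⟨v, hv⟩ ∉ A}

instance (A : Finset (V ⊕ S)) : Finite (unwhiskered S A) :=
  Finite.of_injective (β := A) (fun v => ⟨inl v.1, v.2.1⟩) fun _ _ h =>
    Subtype.ext (by simpa using h)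

lemma unwhiskered_univ [Fintype V] : unwhiskered S Finset.univ = {v | v ∉ S} := by
  ext v
  simp [unwhiskered]

lemma isAcyclic_induce_unwhiskered_of_subset {A B : Finset (V ⊕ S)}
    (hA : (G.induce (unwhiskered S A)).IsAcyclic) (hBA : B ⊆ A)
    (hB : ∀ s (hs : s ∈ S), inl s ∈ B → inr ⟨s, hs⟩ ∈ A → inr ⟨s, hs⟩ ∈ B) :
    (G.induce (unwhiskered S B)).IsAcyclic :=
  hA.embedding <| G.induceHomOfLE fun v (hv : v ∈ unwhiskered S B) =>
    (⟨hBA hv.1, fun hs hsA => hv.2 hs (hB v hs hv.1 hsA)⟩ : v ∈ unwhiskered S A)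

lemma exists_pendant_of_whiskered {A : Finset (V ⊕ S)} {s : V} (hs : s ∈ S)
    (hs'A : inr ⟨s, hs⟩ ∈ A) :
    ∃ w ∈ A, (whiskerS G S).Adj (inl s) w ∧
      ∀ z ∈ A, (whiskerS G S).Adj w z → z = inl s :=
  ⟨inr ⟨s, hs⟩, hs'A, by simp, fun z _ hz => by cases z <;> simp_all⟩

lemma exists_pendant_of_forall_unwhiskered {A : Finset (V ⊕ S)}
    (hA : (G.induce (unwhiskered S A)).IsAcyclic) (hindep : ¬ IsIndepFinset (whiskerS G S) A)
    (hno : ∀ s (hs : s ∈ S), inl s ∈ A → inr ⟨s, hs⟩ ∉ A) :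
    ∃ v, inl v ∈ A ∧ ∃ w ∈ A, (whiskerS G S).Adj (inl v) w ∧
      ∀ z ∈ A, (whiskerS G S).Adj w z → z = inl v := by
  have hmem : ∀ v, inl v ∈ A → v ∈ unwhiskered S A := fun v hv =>
    ⟨hv, fun hs => hno v hs hv⟩
  obtain ⟨a, ha, b, hb, hab⟩ : ∃ a, inl a ∈ A ∧ ∃ b, inl b ∈ A ∧ G.Adj a b := by
    simp only [IsIndepFinset, not_forall, not_not] at hindep
    obtain ⟨a | s, ha, b | t, hb, hab⟩ := hindep
    · exact ⟨a, ha, b, hb, by simpa using hab⟩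
    · exact absurd hb (hno t t.2 (by simp_all))
    · exact absurd ha (hno s s.2 (by simp_all))
    · simp at hab
  obtain ⟨p, q, hpq, hleaf⟩ := hA.exists_adj_forall_adj_eq
    (a := ⟨a, hmem a ha⟩) (b := ⟨b, hmem b hb⟩) hab
  refine ⟨q, q.2.1, inl p, p.2.1, by simpa using hpq.symm, fun z hz hpz => ?_⟩
  cases z with
  | inl z => simp [← hleaf ⟨z, hmem z hz⟩ (by simpa using hpz)]
  | inr t => exact absurd hz (hno t t.2 (by simpa [← whiskerS_adj_inl_inr.mp hpz] using p.2.1))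

lemma exists_pendant_of_not_isIndepFinset {A : Finset (V ⊕ S)}
    (hA : (G.induce (unwhiskered S A)).IsAcyclic) (hindep : ¬ IsIndepFinset (whiskerS G S) A) :
    ∃ v, inl v ∈ A ∧ ∃ w ∈ A, (whiskerS G S).Adj (inl v) w ∧
      ∀ z ∈ A, (whiskerS G S).Adj w z → z = inl v := by
  by_cases hwh : ∃ s, ∃ hs : s ∈ S, inl s ∈ A ∧ inr ⟨s, hs⟩ ∈ A
  · obtain ⟨s, hs, hsA, hs'A⟩ := hwh
    exact ⟨s, hsA, exists_pendant_of_whiskered hs hs'A⟩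
  · simp only [not_exists, not_and] at hwh
    exact exists_pendant_of_forall_unwhiskered hA hindep hwh

theorem vdOn_whiskerS_of_isAcyclic_induce_unwhiskered (A : Finset (V ⊕ S))
    (hA : (G.induce (unwhiskered S A)).IsAcyclic) : VDOn (whiskerS G S) A := by
  refine vdOn_of_forall_exists_adj_closedNbr_subset _
    (fun A => (G.induce (unwhiskered S A)).IsAcyclic) (fun A hA hindep => ?_) A hA
  obtain ⟨v, hv, w, hw, hvw, hpendant⟩ := exists_pendant_of_not_isIndepFinset hA hindep
  refine ⟨inl v, hv, w, hw, hvw, fun z hz hwz => Or.inl (hpendant z hz hwz), ?_, ?_⟩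
  -- `simp` rather than `Finset.erase_subset`/`Finset.sdiff_subset`: those would synthesize
  -- `instDecidableEqSum`, whereas `VDOn` was elaborated with the classical instance.
  · exact isAcyclic_induce_unwhiskered_of_subset hA (by simp [Finset.subset_iff]) (by simp)
  · refine isAcyclic_induce_unwhiskered_of_subset hA
      (fun _ hz => by simp only [Finset.mem_sdiff] at hz; exact hz.1) fun s hs hsB hs'A => ?_
    simp only [Finset.mem_sdiff] at hsB ⊢
    refine ⟨hs'A, fun hN => ?_⟩
    obtain rfl : v = s := by simpa [closedNbrOn, hs'A] using hN
    exact hsB.2 (self_mem_closedNbrOn _ hv)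

end Whisker

/-- If `S` is a decycling set of `G` (i.e. `G - S` is a
forest), then the whisker graph `W_S(G)` is vertex decomposable. -/
theorem whiskerS_vertexDecomposable {V : Type} [Fintype V] (G : SimpleGraph V)
    (S : Finset V) (hS : (G.induce {v : V | v ∉ S}).IsAcyclic) :
    VDOn (whiskerS G S) Finset.univ := by
  refine vdOn_whiskerS_of_isAcyclic_induce_unwhiskered _ ?_
  rwa [unwhiskered_univ]
end

section
/- For any graph G with vertex x and any two partitions {Y,Z} and {Y′,Z′} of N_G(x), the independence complexes I(L_x(G; Y, Z)) and I(L_x(G; Y′, Z′)) are homotopy equivalent. -/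
open scoped Classical

/-! If every neighbour of `c` is adjacent to `p` or to `q`, adding the edge `pq` to a graph does
not change the homotopy type of its independence complex. The faces that disappear are exactly
those containing both `p` and `q`, and each of them stays a face after adding `c`; sliding the
weight `min (f p) (f q)` from `p` and from `q` onto `c` is then a deformation retraction of the
old complex onto the new one.

In `L_x(G; Y, Z)` the vertex `b` plays the role of `c` for a new edge `y v` with `v ∈ Z` (its
neighbours are `a ~ y` and `z ~ v`), and `a` plays it for a new edge `z v` with `v ∈ Y`. Adding
such edges one at a time turns every partition of `N(x)` into the cover `Y = Z = N(x)`. -/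

open ContinuousMap SimpleGraph

section EdgeDeletion

variable {W : Type}

def delEdge (Δ : Finset W → Prop) (p q : W) : Finset W → Prop :=
  fun F => Δ F ∧ ¬(p ∈ F ∧ q ∈ F)

lemma isComplex_indepFaces (K : SimpleGraph W) : IsComplex (indepFaces K) :=
  fun _ _ hF hGF u hu v hv => hF u (hGF hu) v (hGF hv)

lemma indepFaces_sup_edge (K : SimpleGraph W) {p q : W} (hpq : p ≠ q) :
    indepFaces (K ⊔ edge p q) = delEdge (indepFaces K) p q := by
  ext F
  simp only [indepFaces, delEdge, sup_adj, edge_adj, not_or, not_and]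
  constructor
  · intro h
    exact ⟨fun u hu v hv => (h u hu v hv).1,
      fun hp hq => (h p hp q hq).2 (Or.inl ⟨rfl, rfl⟩) hpq⟩
  · rintro ⟨h, hpq'⟩ u hu v hv
    refine ⟨h u hu v hv, ?_⟩
    rintro (⟨rfl, rfl⟩ | ⟨rfl, rfl⟩) -
    exacts [hpq' hu hv, hpq' hv hu]

lemma indepFaces_insert_of_neighbor_dominated (K : SimpleGraph W) {p q c : W}
    (hc : ∀ w, K.Adj c w → K.Adj p w ∨ K.Adj q w) {F : Finset W} (hF : indepFaces K F)
    (hp : p ∈ F) (hq : q ∈ F) : indepFaces K (insert c F) := by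
  have hcF : ∀ z ∈ F, ¬ K.Adj c z := fun z hz hcz =>
    (hc z hcz).elim (hF p hp z hz) (hF q hq z hz)
  intro u hu v hv huv
  rcases Finset.mem_insert.1 hu with rfl | huF <;> rcases Finset.mem_insert.1 hv with rfl | hvF
  · exact K.irrefl huv
  · exact hcF v hvF huv
  · exact hcF u huF huv.symm
  · exact hF u huF v hvF huv

end EdgeDeletion

section TransferMass

variable {W : Type}

/-- The predicate cutting out `cxSpace Δ`. -/
def IsRealizationPoint [Fintype W] (Δ : Finset W → Prop) (f : W → ℝ) : Prop :=
  (∃ F : Finset W, Δ F ∧ ∀ v, f v ≠ 0 → v ∈ F) ∧ (∀ v, 0 ≤ f v) ∧ ∑ v, f v = 1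

noncomputable def transferMass (p q c : W) (t : ℝ) (f : W → ℝ) (w : W) : ℝ :=
  f w + t * min (f p) (f q) *
    ((if w = c then 2 else 0) - (if w = p then 1 else 0) - (if w = q then 1 else 0))

variable {p q c : W} {t : ℝ} {f : W → ℝ}

lemma transferMass_apply_apex (hcp : c ≠ p) (hcq : c ≠ q) :
    transferMass p q c t f c = f c + 2 * (t * min (f p) (f q)) := by
  simp [transferMass, hcp, hcq]; ring

lemma transferMass_apply_left (hpq : p ≠ q) (hcp : c ≠ p) :
    transferMass p q c t f p = f p - t * min (f p) (f q) := by
  simp [transferMass, hpq, hcp.symm]; ring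

lemma transferMass_apply_right (hpq : p ≠ q) (hcq : c ≠ q) :
    transferMass p q c t f q = f q - t * min (f p) (f q) := by
  simp [transferMass, hpq.symm, hcq.symm]; ring

lemma transferMass_apply_of_ne {w : W} (hwp : w ≠ p) (hwq : w ≠ q) (hwc : w ≠ c) :
    transferMass p q c t f w = f w := by
  simp [transferMass, hwp, hwq, hwc]

lemma transferMass_of_min_eq_zero (h : min (f p) (f q) = 0) : transferMass p q c t f = f := by
  ext w; simp [transferMass, h]

lemma transferMass_zero : transferMass p q c 0 f = f := by
  ext w; simp [transferMass]

lemma sum_transferMass [Fintype W] : ∑ w, transferMass p q c t f w = ∑ w, f w := by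
  simp only [transferMass, Finset.sum_add_distrib, ← Finset.mul_sum, Finset.sum_sub_distrib,
    Finset.sum_ite_eq', Finset.mem_univ, ↓reduceIte, add_eq_left, mul_eq_zero]
  norm_num

lemma continuous_transferMass {X : Type} [TopologicalSpace X] {a : X → ℝ} {b : X → W → ℝ}
    (ha : Continuous a) (hb : Continuous b) :
    Continuous fun z => transferMass p q c (a z) (b z) := by
  unfold transferMass; fun_prop

lemma transferMass_nonneg (hpq : p ≠ q) (hcp : c ≠ p) (hcq : c ≠ q) (hf : ∀ v, 0 ≤ f v)
    (ht0 : 0 ≤ t) (ht1 : t ≤ 1) (w : W) : 0 ≤ transferMass p q c t f w := by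
  have hm : 0 ≤ t * min (f p) (f q) := mul_nonneg ht0 (le_min (hf p) (hf q))
  have hmp : t * min (f p) (f q) ≤ f p :=
    (mul_le_of_le_one_left (le_min (hf p) (hf q)) ht1).trans (min_le_left _ _)
  have hmq : t * min (f p) (f q) ≤ f q :=
    (mul_le_of_le_one_left (le_min (hf p) (hf q)) ht1).trans (min_le_right _ _)
  by_cases hwc : w = c
  · subst hwc; rw [transferMass_apply_apex hcp hcq]; linarith [hf w]
  by_cases hwp : w = p
  · subst hwp; rw [transferMass_apply_left hpq hcp]; linarith
  by_cases hwq : w = q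
  · subst hwq; rw [transferMass_apply_right hpq hcq]; linarith
  rw [transferMass_apply_of_ne hwp hwq hwc]; exact hf w

variable [Fintype W] {Δ : Finset W → Prop}

lemma IsRealizationPoint.face_support (hΔ : IsComplex Δ) (hf : IsRealizationPoint Δ f) :
    Δ {v | f v ≠ 0} := by
  obtain ⟨F, hF, hsupp⟩ := hf.1
  exact hΔ hF fun v hv => hsupp v (by simpa using hv)

lemma IsRealizationPoint.mono {Δ' : Finset W → Prop} (h : ∀ F, Δ' F → Δ F)
    (hf : IsRealizationPoint Δ' f) : IsRealizationPoint Δ f :=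
  ⟨hf.1.imp fun F hF => ⟨h F hF.1, hF.2⟩, hf.2⟩

lemma IsRealizationPoint.min_eq_zero (hf : IsRealizationPoint (delEdge Δ p q) f) :
    min (f p) (f q) = 0 := by
  obtain ⟨⟨F, ⟨-, hpq⟩, hsupp⟩, hf0, -⟩ := hf
  by_cases hp : f p = 0
  · rw [hp, min_eq_left (hf0 q)]
  · have hq : f q = 0 := by_contra fun hq => hpq ⟨hsupp p hp, hsupp q hq⟩
    rw [hq, min_eq_right (hf0 p)]

variable (hpq : p ≠ q) (hcp : c ≠ p) (hcq : c ≠ q)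
  (hcone : ∀ F, Δ F → p ∈ F → q ∈ F → Δ (insert c F))
include hpq hcp hcq hcone

lemma isRealizationPoint_transferMass (hf : IsRealizationPoint Δ f) (ht0 : 0 ≤ t)
    (ht1 : t ≤ 1) : IsRealizationPoint Δ (transferMass p q c t f) := by
  obtain ⟨⟨F, hF, hsupp⟩, hf0, hsum⟩ := hf
  refine ⟨?_, transferMass_nonneg hpq hcp hcq hf0 ht0 ht1, sum_transferMass.trans hsum⟩
  rcases (le_min (hf0 p) (hf0 q)).eq_or_lt with hm | hm
  · rw [transferMass_of_min_eq_zero hm.symm]; exact ⟨F, hF, hsupp⟩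
  obtain ⟨hp, hq⟩ := lt_min_iff.1 hm
  have hpF := hsupp p hp.ne'
  have hqF := hsupp q hq.ne'
  refine ⟨insert c F, hcone F hF hpF hqF, fun w hw => ?_⟩
  by_contra hwF
  rw [Finset.mem_insert, not_or] at hwF
  obtain ⟨hwc, hwF⟩ := hwF
  have hwp : w ≠ p := fun h => hwF (h ▸ hpF)
  have hwq : w ≠ q := fun h => hwF (h ▸ hqF)
  rw [transferMass_apply_of_ne hwp hwq hwc] at hw
  exact hwF (hsupp w hw)

lemma isRealizationPoint_delEdge_transferMass_one (hΔ : IsComplex Δ)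
    (hf : IsRealizationPoint Δ f) :
    IsRealizationPoint (delEdge Δ p q) (transferMass p q c 1 f) := by
  have hg := isRealizationPoint_transferMass hpq hcp hcq hcone hf zero_le_one le_rfl
  refine ⟨⟨_, ⟨hg.face_support hΔ, ?_⟩, fun v hv => by simpa using hv⟩, hg.2⟩
  have hvanish : transferMass p q c 1 f p = 0 ∨ transferMass p q c 1 f q = 0 := by
    rw [transferMass_apply_left hpq hcp, transferMass_apply_right hpq hcq, one_mul]
    rcases min_choice (f p) (f q) with h | h <;> rw [h] <;> simp
  rintro ⟨hp, hq⟩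
  simp only [Finset.mem_filter, Finset.mem_univ, true_and] at hp hq
  exact hvanish.elim hp hq

theorem cxSpace_delEdge_homotopyEquiv (hΔ : IsComplex Δ) :
    Nonempty (cxSpace Δ ≃ₕ cxSpace (delEdge Δ p q)) := by
  let retraction : C(cxSpace Δ, cxSpace (delEdge Δ p q)) :=
    ⟨fun f => ⟨transferMass p q c 1 f.1,
        isRealizationPoint_delEdge_transferMass_one hpq hcp hcq hcone hΔ f.2⟩,
      (continuous_transferMass continuous_const continuous_subtype_val).subtype_mk _⟩
  let inclusion : C(cxSpace (delEdge Δ p q), cxSpace Δ) :=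
    ⟨fun f => ⟨f.1, IsRealizationPoint.mono (fun _ hF => hF.1) f.2⟩,
      continuous_subtype_val.subtype_mk _⟩
  let deformation : Homotopy (ContinuousMap.id _) (inclusion.comp retraction) :=
    { toFun := fun sf => ⟨transferMass p q c sf.1 sf.2.1,
        isRealizationPoint_transferMass hpq hcp hcq hcone sf.2.2 sf.1.2.1 sf.1.2.2⟩
      continuous_toFun := (continuous_transferMass (by fun_prop)
        (continuous_subtype_val.comp continuous_snd)).subtype_mk _
      map_zero_left := fun f => Subtype.ext transferMass_zero
      map_one_left := fun f => rfl }
  have hretract : retraction.comp inclusion = ContinuousMap.id _ := by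
    ext f : 2
    exact transferMass_of_min_eq_zero (IsRealizationPoint.min_eq_zero f.2)
  exact ⟨⟨retraction, inclusion, ⟨deformation.symm⟩, hretract ▸ Homotopic.refl _⟩⟩

end TransferMass

theorem cxSpace_indepFaces_sup_edge_homotopyEquiv {W : Type} [Fintype W] (K : SimpleGraph W)
    {p q c : W} (hpq : p ≠ q) (hcp : c ≠ p) (hcq : c ≠ q)
    (hc : ∀ w, K.Adj c w → K.Adj p w ∨ K.Adj q w) :
    Nonempty (cxSpace (indepFaces K) ≃ₕ cxSpace (indepFaces (K ⊔ edge p q))) := by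
  rw [indepFaces_sup_edge K hpq]
  exact cxSpace_delEdge_homotopyEquiv hpq hcp hcq
    (fun _ hF hp hq => indepFaces_insert_of_neighbor_dominated K hc hF hp hq)
    (isComplex_indepFaces K)

section Lozin

variable {V : Type} (G : SimpleGraph V) (x : V)

lemma lozinModel_insert_left {v : V} (hv : v ≠ x) (A B : Set V) :
    lozinModel G x (insert v A) B = lozinModel G x A B ⊔ edge (.inr 0) (.inl ⟨v, hv⟩) := by
  ext (u | i) (w | j) <;>
    simp [lozinModel, lozinRel, edge_adj, Subtype.ext_iff] <;> tauto

lemma lozinModel_insert_right {v : V} (hv : v ≠ x) (A B : Set V) :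
    lozinModel G x A (insert v B) = lozinModel G x A B ⊔ edge (.inr 3) (.inl ⟨v, hv⟩) := by
  ext (u | i) (w | j) <;>
    simp [lozinModel, lozinRel, edge_adj, Subtype.ext_iff] <;> tauto

variable [Fintype V] {A B : Set V}

lemma lozin_homotopyEquiv_insert_left {v : V} (hv : v ≠ x) (hvB : v ∈ B) :
    Nonempty (cxSpace (indepFaces (lozinModel G x A B)) ≃ₕ
      cxSpace (indepFaces (lozinModel G x (insert v A) B))) := by
  rw [lozinModel_insert_left G x hv]
  refine cxSpace_indepFaces_sup_edge_homotopyEquiv _ (c := .inr 2) (by simp) (by simp) (by simp) ?_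
  rintro (w | j) hadj <;> simp [lozinModel, lozinRel] at hadj ⊢
  fin_cases j <;> simp_all

lemma lozin_homotopyEquiv_insert_right {v : V} (hv : v ≠ x) (hvA : v ∈ A) :
    Nonempty (cxSpace (indepFaces (lozinModel G x A B)) ≃ₕ
      cxSpace (indepFaces (lozinModel G x A (insert v B)))) := by
  rw [lozinModel_insert_right G x hv]
  refine cxSpace_indepFaces_sup_edge_homotopyEquiv _ (c := .inr 1) (by simp) (by simp) (by simp) ?_
  rintro (w | j) hadj <;> simp [lozinModel, lozinRel] at hadj ⊢
  fin_cases j <;> simp_all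

lemma lozin_homotopyEquiv_union_left {S : Set V} (hSB : S ⊆ B) (hxS : x ∉ S) :
    Nonempty (cxSpace (indepFaces (lozinModel G x A B)) ≃ₕ
      cxSpace (indepFaces (lozinModel G x (A ∪ S) B))) := by
  induction S, S.toFinite using Set.Finite.induction_on with
  | empty => rw [Set.union_empty]; exact ⟨.refl _⟩
  | @insert v S _ _ ih =>
    obtain ⟨e⟩ := ih ((Set.subset_insert v S).trans hSB) (hxS ∘ Set.mem_insert_of_mem v)
    obtain ⟨e'⟩ := lozin_homotopyEquiv_insert_left G x (A := A ∪ S)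
      (ne_of_mem_of_not_mem (Set.mem_insert v S) hxS) (hSB (Set.mem_insert v S))
    rw [Set.union_insert]
    exact ⟨e.trans e'⟩

lemma lozin_homotopyEquiv_union_right {S : Set V} (hSA : S ⊆ A) (hxS : x ∉ S) :
    Nonempty (cxSpace (indepFaces (lozinModel G x A B)) ≃ₕ
      cxSpace (indepFaces (lozinModel G x A (B ∪ S)))) := by
  induction S, S.toFinite using Set.Finite.induction_on with
  | empty => rw [Set.union_empty]; exact ⟨.refl _⟩
  | @insert v S _ _ ih =>
    obtain ⟨e⟩ := ih ((Set.subset_insert v S).trans hSA) (hxS ∘ Set.mem_insert_of_mem v)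
    obtain ⟨e'⟩ := lozin_homotopyEquiv_insert_right G x (B := B ∪ S)
      (ne_of_mem_of_not_mem (Set.mem_insert v S) hxS) (hSA (Set.mem_insert v S))
    rw [Set.union_insert]
    exact ⟨e.trans e'⟩

lemma lozin_homotopyEquiv_neighborSet {Y Z : Set V} (h : Y ∪ Z = G.neighborSet x) :
    Nonempty (cxSpace (indepFaces (lozinModel G x Y Z)) ≃ₕ
      cxSpace (indepFaces (lozinModel G x (G.neighborSet x) (G.neighborSet x)))) := by
  have hx : x ∉ G.neighborSet x := G.irrefl
  have hZ : Z ⊆ G.neighborSet x := h ▸ Set.subset_union_right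
  obtain ⟨e₁⟩ := lozin_homotopyEquiv_union_left G x (A := Y) subset_rfl (hx ∘ @hZ x)
  obtain ⟨e₂⟩ :=
    lozin_homotopyEquiv_union_right G x (A := G.neighborSet x) (B := Z) subset_rfl hx
  rw [h] at e₁
  rw [Set.union_eq_right.2 hZ] at e₂
  exact ⟨e₁.trans e₂⟩

end Lozin

/-- The homotopy type of the Lozin transform is independent
of the chosen partition of `N_G(x)`. -/
theorem lozin_homotopyEquiv_partition_independent {V : Type} [Fintype V]
    (G : SimpleGraph V) (x : V) (Y Z Y' Z' : Set V)
    (h : IsLozinPartition G x Y Z) (h' : IsLozinPartition G x Y' Z') :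
    Nonempty (ContinuousMap.HomotopyEquiv
      (cxSpace (indepFaces (lozinModel G x Y Z)))
      (cxSpace (indepFaces (lozinModel G x Y' Z')))) := by
  obtain ⟨e⟩ := lozin_homotopyEquiv_neighborSet G x h.1
  obtain ⟨e'⟩ := lozin_homotopyEquiv_neighborSet G x h'.1
  exact ⟨e.trans e'.symm⟩
end

section
/- Let e = (u,v) be an edge of a graph H such that the vertex w is isolated in H − N_H[e] (e is an isolating edge with respect to w). If moreover w has a neighbor x of degree two in H, then reg(H) = reg(H − e). -/
open scoped Classical

/-!
Reduced homology is handled at chain level, with chains on all finsets of vertices. Inserting a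
vertex `a` with its Koszul sign (`chainCone`, `h_a`) and deleting it (`chainLink`, `φ_a`)
satisfy `∂h_a + h_a∂ = 1` and `∂φ_a + φ_a∂ = 0`. These give the exact sequences of a
vertex (deletion and link), the suspension by an edge, and the invariance of homology under
adding the faces through an edge `uv` whose link is a cone.

Since `w` is isolated in `H - N_H[uv]`, the link of `uv` in `Ind((H - uv)[S])` is a cone with
apex `w` when `w ∈ S`, so `H[S]` and `(H - uv)[S]` have the same homology when `u, v, w ∈ S`,
and the two complexes coincide when `S` misses `u` or `v`. When `w ∉ S`, the sequences at `w`
and then at `u` move a nonzero class of one graph on `S` either to such a set or to a class one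
degree lower on `S' = S - N(w) - N[u]`, where the graphs agree; as `N(x) = {w, u}` (after
possibly swapping `u` and `v`), adding the edge `wx` to `S'` suspends it back to the original
degree in the other graph. Hence both graphs realize the same degrees.
-/

section Signs

variable {V : Type} [LinearOrder V]

theorem neg_one_pow_mul_self {R : Type*} [Monoid R] [HasDistribNeg R] (n : ℕ) :
    (-1 : R) ^ n * (-1) ^ n = 1 := by
  rw [← pow_add, ← two_mul, pow_mul, neg_one_sq, one_pow]

theorem neg_one_pow_mul_eq_neg_of_odd {R : Type*} [Ring R] {p q r s : ℕ}
    (h : Odd (p + q + r + s)) : (-1 : R) ^ p * (-1) ^ q = -((-1) ^ r * (-1) ^ s) := by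
  rw [← pow_add, ← pow_add, ← neg_one_mul ((-1 : R) ^ (r + s)), ← pow_succ',
    neg_one_pow_eq_pow_mod_two, neg_one_pow_eq_pow_mod_two (n := r + s + 1)]
  rw [Nat.odd_iff] at h
  congr 1
  omega

theorem Finset.card_filter_lt_insert {a : V} {F : Finset V} (ha : a ∉ F) (x : V) :
    ((insert a F).filter (· < x)).card = (F.filter (· < x)).card + if a < x then 1 else 0 := by
  rw [Finset.filter_insert]
  split_ifs <;> simp [Finset.card_insert_of_notMem, ha]

theorem Finset.filter_lt_erase_self (F : Finset V) (a : V) :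
    (F.erase a).filter (· < a) = F.filter (· < a) := by
  rw [Finset.filter_erase, Finset.erase_eq_of_notMem (by simp)]

/-- The parity identity behind both homotopy formulas: moving `a` past `x` costs one sign. -/
theorem odd_card_filter_lt {a x : V} {F : Finset V} (ha : a ∉ F) (hx : x ∈ F) :
    Odd ((F.filter (· < x)).card + (F.filter (· < a)).card +
      ((insert a F).filter (· < x)).card + ((F.erase x).filter (· < a)).card) := by
  have hxa : x ≠ a := ne_of_mem_of_not_mem hx ha
  have hF : (F.filter (· < a)).card =
      ((F.erase x).filter (· < a)).card + if x < a then 1 else 0 := by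
    rw [← Finset.card_filter_lt_insert (Finset.notMem_erase x F), Finset.insert_erase hx]
  rw [Finset.card_filter_lt_insert ha, hF, Nat.odd_iff]
  rcases lt_or_gt_of_ne hxa with h | h <;>
    simp only [h, if_true, not_lt_of_gt h, if_false] <;> omega

theorem neg_one_pow_filter_lt_insert_mul {R : Type*} [Ring R] {a x : V} {F : Finset V}
    (ha : a ∉ F) (hx : x ∈ F) :
    (-1 : R) ^ (F.filter (· < a)).card * (-1) ^ ((insert a F).filter (· < x)).card =
      -((-1) ^ (F.filter (· < x)).card * (-1) ^ ((F.erase x).filter (· < a)).card) :=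
  neg_one_pow_mul_eq_neg_of_odd (by convert odd_card_filter_lt ha hx using 1; ring)

theorem neg_one_pow_filter_lt_mul {R : Type*} [Ring R] {a x : V} {F : Finset V}
    (ha : a ∉ F) (hx : x ∈ F) :
    (-1 : R) ^ (F.filter (· < a)).card * (-1) ^ (F.filter (· < x)).card =
      -((-1) ^ ((insert a F).filter (· < x)).card * (-1) ^ ((F.erase x).filter (· < a)).card) :=
  neg_one_pow_mul_eq_neg_of_odd (by convert odd_card_filter_lt ha hx using 1; ring)

end Signs

open Finsupp

noncomputable section ChainAlgebra

variable {V : Type} [LinearOrder V] (k : Type) [Field k]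

def chainBoundary : (Finset V →₀ k) →ₗ[k] (Finset V →₀ k) :=
  Finsupp.lsum k fun F => LinearMap.toSpanSingleton k _
    (∑ x ∈ F, ((-1 : k) ^ (F.filter (· < x)).card) • Finsupp.single (F.erase x) (1 : k))

def chainCone (a : V) : (Finset V →₀ k) →ₗ[k] (Finset V →₀ k) :=
  Finsupp.lsum k fun F => LinearMap.toSpanSingleton k _
    (if a ∈ F then 0
      else ((-1 : k) ^ (F.filter (· < a)).card) • Finsupp.single (insert a F) (1 : k))

def chainLink (a : V) : (Finset V →₀ k) →ₗ[k] (Finset V →₀ k) :=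
  Finsupp.lsum k fun F => LinearMap.toSpanSingleton k _
    (if a ∈ F then ((-1 : k) ^ ((F.erase a).filter (· < a)).card) •
        Finsupp.single (F.erase a) (1 : k)
      else 0)

variable {k}

theorem chainBoundary_single (F : Finset V) (r : k) :
    chainBoundary k (single F r) =
      r • ∑ x ∈ F, ((-1 : k) ^ (F.filter (· < x)).card) • single (F.erase x) (1 : k) := by
  simp [chainBoundary, LinearMap.toSpanSingleton_apply]

theorem chainCone_single_of_notMem {a : V} {F : Finset V} (ha : a ∉ F) (r : k) :
    chainCone k a (single F r) =
      single (insert a F) ((-1 : k) ^ (F.filter (· < a)).card * r) := by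
  simp [chainCone, ha, LinearMap.toSpanSingleton_apply, smul_single, mul_comm]

theorem chainCone_single_of_mem {a : V} {F : Finset V} (ha : a ∈ F) (r : k) :
    chainCone k a (single F r) = 0 := by
  simp [chainCone, ha]

theorem chainLink_single_of_mem {a : V} {F : Finset V} (ha : a ∈ F) (r : k) :
    chainLink k a (single F r) =
      single (F.erase a) ((-1 : k) ^ ((F.erase a).filter (· < a)).card * r) := by
  simp [chainLink, ha, LinearMap.toSpanSingleton_apply, smul_single, mul_comm]

theorem chainLink_single_of_notMem {a : V} {F : Finset V} (ha : a ∉ F) (r : k) :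
    chainLink k a (single F r) = 0 := by
  simp [chainLink, ha]

theorem chainBoundary_chainCone_add (a : V) (c : Finset V →₀ k) :
    chainBoundary k (chainCone k a c) + chainCone k a (chainBoundary k c) = c := by
  induction c using Finsupp.induction_linear with
  | zero => simp
  | add c d hc hd => simp only [map_add]; rw [add_add_add_comm, hc, hd]
  | single F b =>
    by_cases ha : a ∈ F
    · rw [chainCone_single_of_mem ha, map_zero, zero_add, chainBoundary_single, map_smul, map_sum,
        Finset.sum_eq_single_of_mem a ha fun x _ hxa => by
          rw [map_smul, chainCone_single_of_mem (Finset.mem_erase.2 ⟨Ne.symm hxa, ha⟩),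
            smul_zero],
        map_smul, chainCone_single_of_notMem (Finset.notMem_erase a F), Finset.insert_erase ha,
        Finset.filter_lt_erase_self, smul_single, smul_single, smul_eq_mul, smul_eq_mul, mul_one,
        neg_one_pow_mul_self, mul_one]
    · have hsa : ((insert a F).filter (· < a)).card = (F.filter (· < a)).card := by
        rw [Finset.card_filter_lt_insert ha, if_neg (lt_irrefl a), add_zero]
      have hcross : ∀ x ∈ F,
          ((-1 : k) ^ (F.filter (· < a)).card * b) •
              (((-1 : k) ^ ((insert a F).filter (· < x)).card) •
                single ((insert a F).erase x) (1 : k)) +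
            b • (((-1 : k) ^ (F.filter (· < x)).card) •
              chainCone k a (single (F.erase x) (1 : k))) = 0 := by
        intro x hx
        have hxa : x ≠ a := ne_of_mem_of_not_mem hx ha
        rw [chainCone_single_of_notMem (fun h => ha (Finset.mem_of_mem_erase h)),
          Finset.erase_insert_of_ne (Ne.symm hxa)]
        simp only [smul_single, smul_eq_mul, mul_one, ← single_add]
        rw [single_eq_zero]
        linear_combination b * neg_one_pow_filter_lt_insert_mul (R := k) ha hx
      rw [chainCone_single_of_notMem ha, chainBoundary_single, Finset.sum_insert ha,
        Finset.erase_insert ha, hsa, chainBoundary_single, map_smul, map_sum, smul_add,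
        add_assoc]
      simp only [map_smul, Finset.smul_sum]
      rw [← Finset.sum_add_distrib, Finset.sum_eq_zero hcross, add_zero, smul_single, smul_single,
        smul_eq_mul, smul_eq_mul, mul_one, mul_comm, ← mul_assoc, neg_one_pow_mul_self, one_mul]

theorem chainBoundary_chainLink_add (a : V) (c : Finset V →₀ k) :
    chainBoundary k (chainLink k a c) + chainLink k a (chainBoundary k c) = 0 := by
  induction c using Finsupp.induction_linear with
  | zero => simp
  | add c d hc hd => simp only [map_add]; rw [add_add_add_comm, hc, hd, add_zero]
  | single F b =>
    by_cases ha : a ∈ F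
    · obtain ⟨G, haG, rfl⟩ : ∃ G, a ∉ G ∧ F = insert a G :=
        ⟨F.erase a, Finset.notMem_erase a F, (Finset.insert_erase ha).symm⟩
      have hcross : ∀ x ∈ G,
          ((-1 : k) ^ (G.filter (· < a)).card * b) •
              (((-1 : k) ^ (G.filter (· < x)).card) • single (G.erase x) (1 : k)) +
            b • (((-1 : k) ^ ((insert a G).filter (· < x)).card) •
              chainLink k a (single ((insert a G).erase x) (1 : k))) = 0 := by
        intro x hx
        have hxa : x ≠ a := ne_of_mem_of_not_mem hx haG
        rw [Finset.erase_insert_of_ne (Ne.symm hxa),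
          chainLink_single_of_mem (Finset.mem_insert_self a _), Finset.erase_insert
            (fun h => haG (Finset.mem_of_mem_erase h))]
        simp only [smul_single, smul_eq_mul, mul_one, ← single_add]
        rw [single_eq_zero]
        linear_combination b * neg_one_pow_filter_lt_mul (R := k) haG hx
      rw [chainLink_single_of_mem ha, Finset.erase_insert haG, chainBoundary_single,
        chainBoundary_single, map_smul, map_sum, Finset.sum_insert haG, Finset.erase_insert haG]
      simp only [map_smul, chainLink_single_of_notMem haG, smul_zero, zero_add, Finset.smul_sum]
      rw [← Finset.sum_add_distrib, Finset.sum_eq_zero hcross]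
    · rw [chainLink_single_of_notMem ha, map_zero, zero_add, chainBoundary_single, map_smul,
        map_sum, Finset.sum_eq_zero fun x _ => by
          rw [map_smul, chainLink_single_of_notMem fun h => ha (Finset.mem_of_mem_erase h),
            smul_zero],
        smul_zero]

theorem chainCone_chainLink (a : V) (c : Finset V →₀ k) :
    chainCone k a (chainLink k a c) = c.filter (a ∈ ·) := by
  induction c using Finsupp.induction_linear with
  | zero => simp [filter_zero]
  | add c d hc hd => rw [map_add, map_add, hc, hd, filter_add]
  | single F b =>
    by_cases ha : a ∈ F
    · rw [chainLink_single_of_mem ha, chainCone_single_of_notMem (Finset.notMem_erase a F),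
        Finset.insert_erase ha, filter_single_of_pos (fun G => a ∈ G) ha, ← mul_assoc,
        neg_one_pow_mul_self, one_mul]
    · rw [chainLink_single_of_notMem ha, map_zero, filter_single_of_neg (fun G => a ∈ G) ha]

theorem chainLink_chainCone (a : V) (c : Finset V →₀ k) :
    chainLink k a (chainCone k a c) = c.filter (a ∉ ·) := by
  induction c using Finsupp.induction_linear with
  | zero => simp [filter_zero]
  | add c d hc hd => rw [map_add, map_add, hc, hd, filter_add]
  | single F b =>
    by_cases ha : a ∈ F
    · rw [chainCone_single_of_mem ha, map_zero,
        filter_single_of_neg (fun G => a ∉ G) (not_not.2 ha)]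
    · rw [chainCone_single_of_notMem ha, chainLink_single_of_mem (Finset.mem_insert_self a F),
        Finset.erase_insert ha, filter_single_of_pos (fun G => a ∉ G) ha, ← mul_assoc,
        neg_one_pow_mul_self, one_mul]

theorem exists_of_mem_support_chainCone {a : V} {c : Finset V →₀ k} {G : Finset V}
    (hG : G ∈ (chainCone k a c).support) : ∃ F ∈ c.support, a ∉ F ∧ G = insert a F := by
  rw [chainCone, lsum_apply] at hG
  obtain ⟨F, hF, hG⟩ := Finset.mem_biUnion.1 (support_sum hG)
  by_cases ha : a ∈ F
  · simp [ha] at hG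
  · simp only [ha, if_false, LinearMap.toSpanSingleton_apply, smul_single, smul_eq_mul,
      mul_one] at hG
    exact ⟨F, hF, ha, Finset.mem_singleton.1 (support_single_subset hG)⟩

theorem exists_of_mem_support_chainLink {a : V} {c : Finset V →₀ k} {G : Finset V}
    (hG : G ∈ (chainLink k a c).support) : ∃ F ∈ c.support, a ∈ F ∧ G = F.erase a := by
  rw [chainLink, lsum_apply] at hG
  obtain ⟨F, hF, hG⟩ := Finset.mem_biUnion.1 (support_sum hG)
  by_cases ha : a ∈ F
  · simp only [ha, if_true, LinearMap.toSpanSingleton_apply, smul_single, smul_eq_mul,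
      mul_one] at hG
    exact ⟨F, hF, ha, Finset.mem_singleton.1 (support_single_subset hG)⟩
  · simp [ha] at hG

theorem chainLink_eq_zero {a : V} {c : Finset V →₀ k} (h : ∀ F ∈ c.support, a ∉ F) :
    chainLink k a c = 0 := by
  rw [chainLink, lsum_apply]
  exact Finset.sum_eq_zero fun F hF => by simp [h F hF]

theorem chainBoundary_single_empty (r : k) : chainBoundary k (single (∅ : Finset V) r) = 0 := by
  simp [chainBoundary_single]

theorem chainBoundary_chainBoundary (c : Finset V →₀ k) :
    chainBoundary k (chainBoundary k c) = 0 := by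
  induction c using Finsupp.induction_linear with
  | zero => simp
  | add c d hc hd => rw [map_add, map_add, hc, hd, add_zero]
  | single F b =>
    induction hn : F.card generalizing F b with
    | zero => rw [Finset.card_eq_zero.1 hn, chainBoundary_single_empty, map_zero]
    | succ n ih =>
      obtain ⟨a, ha⟩ : F.Nonempty := Finset.card_pos.1 (by omega)
      have hF : single F b = chainCone k a (single (F.erase a)
          ((-1 : k) ^ ((F.erase a).filter (· < a)).card * b)) := by
        rw [chainCone_single_of_notMem (Finset.notMem_erase a F), Finset.insert_erase ha,
          ← mul_assoc, neg_one_pow_mul_self, one_mul]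
      have hcomm : ∀ c, chainBoundary k (chainBoundary k (chainCone k a c)) =
          chainCone k a (chainBoundary k (chainBoundary k c)) := fun c => by
        rw [eq_sub_of_add_eq (chainBoundary_chainCone_add a c), map_sub,
          eq_sub_of_add_eq (chainBoundary_chainCone_add a (chainBoundary k c)), sub_sub_cancel]
      rw [hF, hcomm, ih _ _ (by rw [Finset.card_erase_of_mem ha, hn, Nat.add_sub_cancel]),
        map_zero]

end ChainAlgebra

section ChainsOn

variable {V : Type} {M : Type*}

def IsChainOn [Zero M] (Δ : Finset V → Prop) (n : ℕ) (c : Finset V →₀ M) : Prop :=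
  ∀ F ∈ c.support, Δ F ∧ F.card = n

theorem lkC_iff [DecidableEq V] {Δ : Finset V → Prop} {a : V} {F : Finset V} :
    lkC Δ a F ↔ a ∉ F ∧ Δ (insert a F) := by
  unfold lkC
  congr!

namespace IsChainOn

variable [AddCommGroup M] {Δ Δ' : Finset V → Prop} {n : ℕ} {c d : Finset V →₀ M}

theorem add (hc : IsChainOn Δ n c) (hd : IsChainOn Δ n d) : IsChainOn Δ n (c + d) :=
  fun F hF => (Finset.mem_union.1 (support_add hF)).elim (hc F) (hd F)

theorem neg (hc : IsChainOn Δ n c) : IsChainOn Δ n (-c) := by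
  simpa [IsChainOn] using hc

theorem sub (hc : IsChainOn Δ n c) (hd : IsChainOn Δ n d) : IsChainOn Δ n (c - d) := by
  simpa only [sub_eq_add_neg] using hc.add hd.neg

theorem mono (hc : IsChainOn Δ n c) (h : ∀ F, Δ F → Δ' F) : IsChainOn Δ' n c :=
  fun F hF => ⟨h F (hc F hF).1, (hc F hF).2⟩

theorem filter (hc : IsChainOn Δ n c) (p : Finset V → Prop) [DecidablePred p]
    (h : ∀ F, Δ F → p F → Δ' F) : IsChainOn Δ' n (c.filter p) := fun F hF => by
  rw [support_filter, Finset.mem_filter] at hF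
  exact ⟨h F (hc F hF.1).1 hF.2, (hc F hF.1).2⟩

theorem delC_filter [DecidableEq V] (hc : IsChainOn Δ n c) (a : V) :
    IsChainOn (delC Δ a) n (c.filter (a ∉ ·)) :=
  hc.filter _ fun _ hF ha => ⟨hF, ha⟩

theorem delC_of_lkC (hΔ : IsComplex Δ) {a : V} (hc : IsChainOn (lkC Δ a) n c) :
    IsChainOn (delC Δ a) n c := by
  classical
  exact hc.mono fun F hF => ⟨hΔ (lkC_iff.1 hF).2 (Finset.subset_insert a F), (lkC_iff.1 hF).1⟩

variable [LinearOrder V] {k : Type} [Field k] {c : Finset V →₀ k}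

theorem chainCone (hc : IsChainOn Δ n c) {a : V}
    (h : ∀ F, Δ F → a ∉ F → Δ' (insert a F)) :
    IsChainOn Δ' (n + 1) (_root_.chainCone k a c) := fun G hG => by
  obtain ⟨F, hF, ha, rfl⟩ := exists_of_mem_support_chainCone hG
  exact ⟨h F (hc F hF).1 ha, by rw [Finset.card_insert_of_notMem ha, (hc F hF).2]⟩

theorem chainLink (hc : IsChainOn Δ (n + 1) c) {a : V}
    (h : ∀ F, Δ F → a ∈ F → Δ' (F.erase a)) :
    IsChainOn Δ' n (_root_.chainLink k a c) := fun G hG => by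
  obtain ⟨F, hF, ha, rfl⟩ := exists_of_mem_support_chainLink hG
  exact ⟨h F (hc F hF).1 ha,
    by rw [Finset.card_erase_of_mem ha, (hc F hF).2, Nat.add_sub_cancel]⟩

theorem lkC_chainLink (hc : IsChainOn Δ (n + 1) c) (a : V) :
    IsChainOn (lkC Δ a) n (_root_.chainLink k a c) :=
  hc.chainLink fun F hF ha =>
    lkC_iff.2 ⟨Finset.notMem_erase a F, by rwa [Finset.insert_erase ha]⟩

theorem chainCone_of_lkC {a : V} (hc : IsChainOn (lkC Δ a) n c) :
    IsChainOn Δ (n + 1) (_root_.chainCone k a c) :=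
  hc.chainCone fun _ hF _ => (lkC_iff.1 hF).2

theorem chainBoundary_eq_zero_of_card_zero (hc : IsChainOn Δ 0 c) : chainBoundary k c = 0 := by
  have hsupp : c.support ⊆ {∅} := fun F hF =>
    Finset.mem_singleton.2 (Finset.card_eq_zero.1 (hc F hF).2)
  rw [support_subset_singleton.1 hsupp, chainBoundary_single_empty]

end IsChainOn

variable [LinearOrder V] (k : Type) [Field k]

/-- `HNontrivial k Δ j` restated with chains on all finsets, so that the chains of different
complexes live in one module and can be compared and combined. -/
def HasNonBoundingCycle (Δ : Finset V → Prop) (j : ℕ) : Prop :=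
  ∃ z : Finset V →₀ k, IsChainOn Δ j z ∧ chainBoundary k z = 0 ∧
    ∀ C, IsChainOn Δ (j + 1) C → chainBoundary k C ≠ z

end ChainsOn

noncomputable section FacesBridge

variable {V : Type} {k : Type} [Field k] (Δ : Finset V → Prop)

variable (k) in
def facesIncl (n : ℕ) : (Faces Δ n →₀ k) →ₗ[k] (Finset V →₀ k) :=
  Finsupp.lmapDomain k k fun F : Faces Δ n => F.1

theorem facesIncl_injective (n : ℕ) : Function.Injective (facesIncl k Δ n) :=
  mapDomain_injective fun _ _ => Subtype.ext

theorem facesIncl_single {n : ℕ} (F : Faces Δ n) (r : k) :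
    facesIncl k Δ n (single F r) = single F.1 r :=
  mapDomain_single

variable (k) in
def facesRestrict (n : ℕ) (z : Finset V →₀ k) : Faces Δ n →₀ k :=
  z.subtypeDomain fun F => Δ F ∧ F.card = n

theorem isChainOn_facesIncl (n : ℕ) (c : Faces Δ n →₀ k) :
    IsChainOn Δ n (facesIncl k Δ n c) :=
  fun F hF => by
    obtain ⟨F, -, rfl⟩ := Finset.mem_image.1 (mapDomain_support hF)
    exact F.2

theorem facesIncl_facesRestrict {n : ℕ} {z : Finset V →₀ k} (hz : IsChainOn Δ n z) :
    facesIncl k Δ n (facesRestrict k Δ n z) = z := by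
  ext F
  by_cases hF : Δ F ∧ F.card = n
  · exact mapDomain_apply (fun _ _ => Subtype.ext) _ (⟨F, hF⟩ : Faces Δ n)
  · change mapDomain (fun G : Faces Δ n => G.1) (facesRestrict k Δ n z) F = z F
    rw [mapDomain_of_notMem_range _ _ fun ⟨G, hG⟩ => hF (hG ▸ G.2)]
    exact (notMem_support_iff.1 fun h => hF (hz F h)).symm

variable [LinearOrder V]

theorem facesIncl_cxBoundary (hΔ : IsComplex Δ) (n : ℕ) (c : Faces Δ (n + 1) →₀ k) :
    facesIncl k Δ n (cxBoundary k Δ n c) = chainBoundary k (facesIncl k Δ (n + 1) c) := by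
  induction c using Finsupp.induction_linear with
  | zero => simp
  | add c d hc hd => rw [map_add, map_add, map_add, map_add, hc, hd]
  | single F b =>
    have hface : ∀ x ∈ F.1, Δ (F.1.erase x) ∧ (F.1.erase x).card = n := fun x hx =>
      ⟨hΔ F.2.1 (Finset.erase_subset _ _), by rw [Finset.card_erase_of_mem hx, F.2.2]; rfl⟩
    rw [facesIncl_single, chainBoundary_single, cxBoundary, lsum_single,
      LinearMap.toSpanSingleton_apply, map_smul]
    -- `cxBoundary` builds its faces as plain subtypes, which match `Faces` only up to unfolding
    erw [map_sum]
    congr 1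
    refine Eq.trans (Finset.sum_congr rfl fun x _ => ?_) (Finset.sum_attach _ _)
    erw [map_smul, dif_pos (hface x x.2), facesIncl_single]

theorem hasNonBoundingCycle_iff_hNontrivial (hΔ : IsComplex Δ) (j : ℕ) :
    HasNonBoundingCycle k Δ j ↔ HNontrivial k Δ j := by
  rw [HNontrivial, SetLike.not_le_iff_exists]
  constructor
  · rintro ⟨z, hz, hcyc, hbd⟩
    refine ⟨facesRestrict k Δ _ z, ?_, ?_⟩
    · cases j with
      | zero => exact Submodule.mem_top
      | succ m =>
        refine LinearMap.mem_ker.2 (facesIncl_injective Δ m ?_)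
        rw [facesIncl_cxBoundary Δ hΔ, facesIncl_facesRestrict Δ hz, hcyc, map_zero]
    · rintro ⟨C, hC⟩
      refine hbd _ (isChainOn_facesIncl Δ (j + 1) C) ?_
      rw [← facesIncl_cxBoundary Δ hΔ, hC, facesIncl_facesRestrict Δ hz]
  · rintro ⟨z, hcyc, hbd⟩
    refine ⟨facesIncl k Δ j z, isChainOn_facesIncl Δ j z, ?_, fun C hC hCz => hbd ?_⟩
    · cases j with
      | zero => exact (isChainOn_facesIncl Δ 0 z).chainBoundary_eq_zero_of_card_zero
      | succ m => rw [← facesIncl_cxBoundary Δ hΔ, LinearMap.mem_ker.1 hcyc, map_zero]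
    · refine ⟨facesRestrict k Δ _ C, facesIncl_injective Δ j ?_⟩
      rw [facesIncl_cxBoundary Δ hΔ, facesIncl_facesRestrict Δ hC, hCz]

end FacesBridge

section Homology

variable {V : Type} [LinearOrder V] {k : Type} [Field k]

theorem chainBoundary_chainCone_of_cycle (a : V) {z : Finset V →₀ k}
    (hz : chainBoundary k z = 0) : chainBoundary k (chainCone k a z) = z := by
  rw [eq_sub_of_add_eq (chainBoundary_chainCone_add a z), hz, map_zero, sub_zero]

theorem chainBoundary_chainLink (a : V) (c : Finset V →₀ k) :
    chainBoundary k (chainLink k a c) = -chainLink k a (chainBoundary k c) :=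
  eq_neg_of_add_eq_zero_left (chainBoundary_chainLink_add a c)

theorem chainCone_chainLink_add_filter (a : V) (c : Finset V →₀ k) :
    chainCone k a (chainLink k a c) + c.filter (a ∉ ·) = c := by
  rw [chainCone_chainLink, filter_add_filter_not]

theorem chainBoundary_filter_notMem (a : V) {c : Finset V →₀ k}
    (hc : chainBoundary k (chainLink k a c) = 0) :
    chainBoundary k (c.filter (a ∉ ·)) = chainBoundary k c - chainLink k a c := by
  rw [← chainCone_chainLink_add_filter a c, map_add, chainBoundary_chainCone_of_cycle a hc,
    chainCone_chainLink_add_filter, add_sub_cancel_left]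

variable {Δ : Finset V → Prop}

theorem not_hasNonBoundingCycle_zero {u : V} (hu : Δ {u}) : ¬ HasNonBoundingCycle k Δ 0 := by
  rintro ⟨z, hz, -, hnb⟩
  have hz' : IsChainOn (· = ∅) 0 z := fun F hF =>
    ⟨Finset.card_eq_zero.1 (hz F hF).2, (hz F hF).2⟩
  refine hnb (chainCone k u z) (hz'.chainCone fun F hF _ => ?_)
    (chainBoundary_chainCone_of_cycle u hz.chainBoundary_eq_zero_of_card_zero)
  rwa [hF, Finset.insert_empty]

theorem HasNonBoundingCycle.suspension {K : Finset V → Prop} {a b : V} (hab : a ≠ b)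
    (hK : ∀ F, K F → a ∉ F ∧ b ∉ F ∧ Δ (insert a F) ∧ Δ (insert b F))
    (hlk : ∀ F, lkC Δ a F → K F) {j : ℕ} (h : HasNonBoundingCycle k K j) :
    HasNonBoundingCycle k Δ (j + 1) := by
  obtain ⟨z, hz, hcyc, hnb⟩ := h
  have hza : ∀ F ∈ z.support, a ∉ F := fun F hF => (hK F (hz F hF).1).1
  refine ⟨chainCone k a z - chainCone k b z,
    (hz.chainCone fun F hF _ => (hK F hF).2.2.1).sub (hz.chainCone fun F hF _ => (hK F hF).2.2.2),
    by rw [map_sub, chainBoundary_chainCone_of_cycle a hcyc,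
      chainBoundary_chainCone_of_cycle b hcyc, sub_self], fun C hC hCz => ?_⟩
  -- the link of `a` recovers `z` from any filling of the suspended cycle
  have hlinkb : chainLink k a (chainCone k b z) = 0 := chainLink_eq_zero fun G hG => by
    obtain ⟨F, hF, -, rfl⟩ := exists_of_mem_support_chainCone hG
    exact fun h => (Finset.mem_insert.1 h).elim hab (hza F hF)
  refine hnb (-chainLink k a C) ((hC.lkC_chainLink a).mono hlk).neg ?_
  rw [map_neg, chainBoundary_chainLink, neg_neg, hCz, map_sub, hlinkb, sub_zero,
    chainLink_chainCone, (filter_eq_self_iff _ _).2 fun F hF => hza F (mem_support_iff.2 hF)]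

theorem HasNonBoundingCycle.of_delC (hΔ : IsComplex Δ) {a : V} {j : ℕ}
    (h : HasNonBoundingCycle k (delC Δ a) j) :
    HasNonBoundingCycle k Δ j ∨ HasNonBoundingCycle k (lkC Δ a) j := by
  obtain ⟨z, hz, hcyc, hnb⟩ := h
  rw [or_iff_not_and_not]
  rintro ⟨hΔj, hlkj⟩
  obtain ⟨C, hC, rfl⟩ : ∃ C, IsChainOn Δ (j + 1) C ∧ chainBoundary k C = z := by
    by_contra! hC
    exact hΔj ⟨z, hz.mono fun _ hF => hF.1, hcyc, hC⟩
  have hlink : chainBoundary k (chainLink k a C) = 0 := by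
    rw [chainBoundary_chainLink, chainLink_eq_zero fun F hF => (hz F hF).1.2, neg_zero]
  obtain ⟨D, hD, hDC⟩ : ∃ D, IsChainOn (lkC Δ a) (j + 1) D ∧
      chainBoundary k D = chainLink k a C := by
    by_contra! hD
    exact hlkj ⟨_, hC.lkC_chainLink a, hlink, hD⟩
  refine hnb (C.filter (a ∉ ·) + D) ((hC.delC_filter a).add (hD.delC_of_lkC hΔ)) ?_
  rw [map_add, hDC, chainBoundary_filter_notMem a hlink, sub_add_cancel]

theorem HasNonBoundingCycle.delC_or_lkC (hΔ : IsComplex Δ) (a : V) {m : ℕ}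
    (h : HasNonBoundingCycle k Δ (m + 1)) :
    HasNonBoundingCycle k (delC Δ a) (m + 1) ∨ HasNonBoundingCycle k (lkC Δ a) m := by
  obtain ⟨z, hz, hcyc, hnb⟩ := h
  have hlink : chainBoundary k (chainLink k a z) = 0 := by
    rw [chainBoundary_chainLink, hcyc, map_zero, neg_zero]
  by_cases hD : ∀ D, IsChainOn (lkC Δ a) (m + 1) D → chainBoundary k D ≠ chainLink k a z
  · exact Or.inr ⟨_, hz.lkC_chainLink a, hlink, hD⟩
  push Not at hD
  obtain ⟨D, hD, hDz⟩ := hD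
  refine Or.inl ⟨z.filter (a ∉ ·) + D, (hz.delC_filter a).add (hD.delC_of_lkC hΔ), ?_,
    fun E hE hEz => hnb (E - chainCone k a D) ((hE.mono fun _ hF => hF.1).sub
      hD.chainCone_of_lkC) ?_⟩
  · rw [map_add, hDz, chainBoundary_filter_notMem a hlink, hcyc, zero_sub, neg_add_cancel]
  · rw [map_sub, hEz, eq_sub_of_add_eq (chainBoundary_chainCone_add a D), hDz]
    conv_rhs => rw [← chainCone_chainLink_add_filter a z]
    abel

theorem chainLink_chainLink_eq_zero {u v : V} {c : Finset V →₀ k}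
    (h : ∀ F ∈ c.support, ¬(u ∈ F ∧ v ∈ F)) : chainLink k u (chainLink k v c) = 0 :=
  chainLink_eq_zero fun G hG hu => by
    obtain ⟨F, hF, hv, rfl⟩ := exists_of_mem_support_chainLink hG
    exact h F hF ⟨Finset.mem_of_mem_erase hu, hv⟩

theorem chainBoundary_chainLink_chainLink (u v : V) (c : Finset V →₀ k) :
    chainBoundary k (chainLink k u (chainLink k v c)) =
      chainLink k u (chainLink k v (chainBoundary k c)) := by
  rw [chainBoundary_chainLink, chainBoundary_chainLink, map_neg, neg_neg]

theorem chainCone_chainCone_chainLink_chainLink {u v : V} (huv : u ≠ v) (c : Finset V →₀ k) :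
    chainCone k v (chainCone k u (chainLink k u (chainLink k v c))) =
      c.filter fun F => u ∈ F ∧ v ∈ F := by
  induction c using Finsupp.induction_linear with
  | zero => simp [filter_zero]
  | add c d hc hd => simp only [map_add, hc, hd, filter_add]
  | single F b =>
    by_cases hv : v ∈ F
    · by_cases hu : u ∈ F
      · have hu' : u ∈ F.erase v := Finset.mem_erase.2 ⟨huv, hu⟩
        rw [chainLink_single_of_mem hv, chainLink_single_of_mem hu',
          chainCone_single_of_notMem (Finset.notMem_erase u _), Finset.insert_erase hu',
          ← mul_assoc, neg_one_pow_mul_self, one_mul,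
          chainCone_single_of_notMem (Finset.notMem_erase v _), Finset.insert_erase hv,
          ← mul_assoc, neg_one_pow_mul_self, one_mul,
          filter_single_of_pos (fun G => u ∈ G ∧ v ∈ G) ⟨hu, hv⟩]
      · rw [chainLink_single_of_mem hv,
          chainLink_single_of_notMem fun h => hu (Finset.mem_of_mem_erase h), map_zero, map_zero,
          filter_single_of_neg (fun G => u ∈ G ∧ v ∈ G) fun h => hu h.1]
    · rw [chainLink_single_of_notMem hv, map_zero, map_zero, map_zero,
        filter_single_of_neg (fun G => u ∈ G ∧ v ∈ G) fun h => hv h.2]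

section EdgeStar

variable {Δ' : Finset V → Prop} {u v w : V}

/-- The filling is `h_v h_u h_w φ_u φ_v X`: the link of `X` at `uv` is coned off at the apex `w`
and `u, v` are put back. -/
theorem exists_eq_add_chainBoundary_of_coneLink_of_card (huv : u ≠ v) (hΔ' : IsComplex Δ')
    (hΔ : ∀ F, Δ F ↔ Δ' F ∧ ¬(u ∈ F ∧ v ∈ F))
    (hw : ∀ G, lkC (lkC Δ' v) u G → lkC (lkC Δ' v) u (insert w G)) {m : ℕ}
    {X : Finset V →₀ k} (hX : IsChainOn Δ' (m + 2) X)
    (hX₂ : chainLink k u (chainLink k v (chainBoundary k X)) = 0) :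
    ∃ Y P, IsChainOn Δ (m + 2) Y ∧ IsChainOn Δ' (m + 3) P ∧ X = Y + chainBoundary k P := by
  set L := chainLink k u (chainLink k v X)
  have hL : IsChainOn (lkC (lkC Δ' v) u) m L := (hX.lkC_chainLink v).lkC_chainLink u
  have hLcyc : chainBoundary k L = 0 := by rw [chainBoundary_chainLink_chainLink, hX₂]
  set D := chainCone k w L
  have hD : IsChainOn (lkC (lkC Δ' v) u) (m + 1) D := hL.chainCone fun G hG _ => hw G hG
  have huD : IsChainOn (lkC Δ' v) (m + 2) (chainCone k u D) := hD.chainCone_of_lkC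
  refine ⟨X.filter (fun F => ¬(u ∈ F ∧ v ∈ F)) - chainCone k u D + chainCone k v D,
    chainCone k v (chainCone k u D),
    ((hX.filter _ fun F hF h => (hΔ F).2 ⟨hF, h⟩).sub ?_).add ?_, huD.chainCone_of_lkC, ?_⟩
  · refine huD.mono fun F hF => (hΔ F).2 ⟨hΔ' (lkC_iff.1 hF).2 (Finset.subset_insert v F),
      fun h => (lkC_iff.1 hF).1 h.2⟩
  · refine hD.chainCone fun G hG hvG => (hΔ _).2 ⟨hΔ' (lkC_iff.1 (lkC_iff.1 hG).2).2 ?_, ?_⟩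
    · exact Finset.insert_subset_insert v (Finset.subset_insert u G)
    · rintro ⟨hu, -⟩
      rcases Finset.mem_insert.1 hu with h | h
      · exact huv h
      · exact (lkC_iff.1 hG).1 h
  · rw [eq_sub_of_add_eq (chainBoundary_chainCone_add v (chainCone k u D)),
      eq_sub_of_add_eq (chainBoundary_chainCone_add u D), chainBoundary_chainCone_of_cycle w hLcyc,
      map_sub, chainCone_chainCone_chainLink_chainLink huv]
    conv_lhs => rw [← filter_add_filter_not X fun F => u ∈ F ∧ v ∈ F]
    abel

theorem exists_eq_add_chainBoundary_of_coneLink (huv : u ≠ v) (hΔ' : IsComplex Δ')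
    (hΔ : ∀ F, Δ F ↔ Δ' F ∧ ¬(u ∈ F ∧ v ∈ F))
    (hw : ∀ G, lkC (lkC Δ' v) u G → lkC (lkC Δ' v) u (insert w G)) {n : ℕ}
    {X : Finset V →₀ k} (hX : IsChainOn Δ' n X)
    (hX₂ : chainLink k u (chainLink k v (chainBoundary k X)) = 0) :
    ∃ Y P, IsChainOn Δ n Y ∧ IsChainOn Δ' (n + 1) P ∧ X = Y + chainBoundary k P := by
  rcases lt_or_ge n 2 with hn | hn
  · refine ⟨X, 0, fun F hF => ⟨(hΔ F).2 ⟨(hX F hF).1, fun ⟨hu, hv⟩ => huv ?_⟩,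
      (hX F hF).2⟩, by simp [IsChainOn], by simp⟩
    have hF1 : F.card ≤ 1 := by rw [(hX F hF).2]; omega
    exact Finset.card_le_one.1 hF1 u hu v hv
  · obtain ⟨m, rfl⟩ := Nat.exists_eq_add_of_le' hn
    exact exists_eq_add_chainBoundary_of_coneLink_of_card huv hΔ' hΔ hw hX hX₂

theorem hasNonBoundingCycle_iff_of_coneLink (huv : u ≠ v) (hΔ' : IsComplex Δ')
    (hΔ : ∀ F, Δ F ↔ Δ' F ∧ ¬(u ∈ F ∧ v ∈ F))
    (hw : ∀ G, lkC (lkC Δ' v) u G → lkC (lkC Δ' v) u (insert w G)) (j : ℕ) :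
    HasNonBoundingCycle k Δ j ↔ HasNonBoundingCycle k Δ' j := by
  have hΔΔ' : ∀ F, Δ F → Δ' F := fun F hF => ((hΔ F).1 hF).1
  constructor
  · rintro ⟨z, hz, hcyc, hnb⟩
    refine ⟨z, hz.mono hΔΔ', hcyc, fun C hC hCz => ?_⟩
    obtain ⟨Y, P, hY, -, rfl⟩ := exists_eq_add_chainBoundary_of_coneLink huv hΔ' hΔ hw hC
      (by rw [hCz]; exact chainLink_chainLink_eq_zero fun F hF => ((hΔ F).1 (hz F hF).1).2)
    exact hnb Y hY (by rw [← hCz, map_add, chainBoundary_chainBoundary, add_zero])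
  · rintro ⟨z, hz, hcyc, hnb⟩
    obtain ⟨Y, P, hY, hP, rfl⟩ := exists_eq_add_chainBoundary_of_coneLink huv hΔ' hΔ hw hz
      (by rw [hcyc, map_zero, map_zero])
    rw [map_add, chainBoundary_chainBoundary, add_zero] at hcyc
    exact ⟨Y, hY, hcyc, fun E hE hEY => hnb (E + P) ((hE.mono hΔΔ').add hP)
      (by rw [map_add, hEY])⟩

end EdgeStar

end Homology

section IndependenceComplex

variable {V : Type} (G : SimpleGraph V)

theorem isComplex_restrictC_indepFaces (S : Set V) : IsComplex (restrictC (indepFaces G) S) :=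
  fun _ _ ⟨hS, hF⟩ hGF => ⟨(Finset.coe_subset.2 hGF).trans hS,
    fun a ha b hb => hF a (hGF ha) b (hGF hb)⟩

variable {G}

theorem indepFaces_insert [DecidableEq V] {a : V} {F : Finset V} :
    indepFaces G (insert a F) ↔ indepFaces G F ∧ ∀ z ∈ F, ¬G.Adj a z := by
  simp only [indepFaces, Finset.mem_insert, forall_eq_or_imp, SimpleGraph.irrefl,
    not_false_eq_true, true_and]
  constructor
  · exact fun ⟨ha, hF⟩ => ⟨fun u hu v hv => (hF u hu).2 v hv, ha⟩
  · exact fun ⟨hF, ha⟩ => ⟨ha, fun u hu => ⟨fun h => ha u hu h.symm, hF u hu⟩⟩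

theorem restrictC_indepFaces_insert [DecidableEq V] {S : Set V} {a : V} {F : Finset V}
    (ha : a ∈ S) (hS : ∀ z ∈ S, ¬G.Adj a z) (hF : restrictC (indepFaces G) S F) :
    restrictC (indepFaces G) S (insert a F) :=
  ⟨by simpa [Set.insert_subset_iff] using ⟨ha, hF.1⟩,
    indepFaces_insert.2 ⟨hF.2, fun z hz => hS z (hF.1 hz)⟩⟩

variable (G)

theorem delC_restrictC_indepFaces (S : Set V) (a : V) :
    delC (restrictC (indepFaces G) S) a = restrictC (indepFaces G) (S \ {a}) := by
  ext F
  simp only [delC, restrictC, Set.subset_sdiff, Set.disjoint_singleton_right, Finset.mem_coe]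
  tauto

theorem lkC_restrictC_indepFaces {S : Set V} {a : V} (ha : a ∈ S) :
    lkC (restrictC (indepFaces G) S) a =
      restrictC (indepFaces G) (S \ insert a (G.neighborSet a)) := by
  classical
  ext F
  simp only [lkC_iff, restrictC, indepFaces_insert, Finset.coe_insert, Set.insert_subset_iff,
    Set.subset_sdiff, Set.disjoint_left, Set.mem_insert_iff, SimpleGraph.mem_neighborSet,
    Finset.mem_coe, not_or]
  constructor
  · rintro ⟨haF, ⟨-, hFS⟩, hF, hnadj⟩
    exact ⟨⟨hFS, fun z hz => ⟨fun h => haF (h ▸ hz), hnadj z hz⟩⟩, hF⟩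
  · rintro ⟨⟨hFS, hnadj⟩, hF⟩
    exact ⟨fun haF => (hnadj haF).1 rfl, ⟨ha, hFS⟩, hF, fun z hz => (hnadj hz).2⟩

end IndependenceComplex

section IndependenceHomology

variable {V : Type} [LinearOrder V] {k : Type} [Field k] (G : SimpleGraph V)

theorem hasNonBoundingCycle_insert_or {S : Set V} {a : V} (ha : a ∉ S) {j : ℕ}
    (h : HasNonBoundingCycle k (restrictC (indepFaces G) S) j) :
    HasNonBoundingCycle k (restrictC (indepFaces G) (insert a S)) j ∨
      HasNonBoundingCycle k (restrictC (indepFaces G) (S \ G.neighborSet a)) j := by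
  rw [← Set.insert_sdiff_self_of_notMem ha, ← delC_restrictC_indepFaces] at h
  have := h.of_delC (isComplex_restrictC_indepFaces G _)
  rwa [lkC_restrictC_indepFaces G (Set.mem_insert a S),
    Set.insert_sdiff_of_mem _ (Set.mem_insert a _), Set.sdiff_insert_of_notMem ha] at this

theorem hasNonBoundingCycle_diff_or {S : Set V} {a : V} (ha : a ∈ S) {m : ℕ}
    (h : HasNonBoundingCycle k (restrictC (indepFaces G) S) (m + 1)) :
    HasNonBoundingCycle k (restrictC (indepFaces G) (S \ {a})) (m + 1) ∨
      HasNonBoundingCycle k (restrictC (indepFaces G) (S \ insert a (G.neighborSet a))) m := by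
  rw [← delC_restrictC_indepFaces, ← lkC_restrictC_indepFaces G ha]
  exact h.delC_or_lkC (isComplex_restrictC_indepFaces G S) a

theorem not_hasNonBoundingCycle_restrictC_zero {S : Set V} {a : V} (ha : a ∈ S) :
    ¬ HasNonBoundingCycle k (restrictC (indepFaces G) S) 0 :=
  not_hasNonBoundingCycle_zero ⟨by simpa using ha, by simp [indepFaces]⟩

theorem HasNonBoundingCycle.insert_insert_of_adj {S : Set V} {a b : V} (hab : G.Adj a b)
    (haS : a ∉ S) (hbS : b ∉ S) (hS : ∀ z ∈ S, ¬G.Adj a z ∧ ¬G.Adj b z) {j : ℕ}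
    (h : HasNonBoundingCycle k (restrictC (indepFaces G) S) j) :
    HasNonBoundingCycle k (restrictC (indepFaces G) (insert a (insert b S))) (j + 1) := by
  refine h.suspension hab.ne ?_ ?_
  · rintro F ⟨hFS, hF⟩
    have hFS' : ∀ z ∈ F, z ∈ S := fun z hz => hFS hz
    refine ⟨fun h => haS (hFS' a h), fun h => hbS (hFS' b h), ⟨?_, indepFaces_insert.2
      ⟨hF, fun z hz => (hS z (hFS' z hz)).1⟩⟩, ⟨?_, indepFaces_insert.2
      ⟨hF, fun z hz => (hS z (hFS' z hz)).2⟩⟩⟩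
    · rw [Finset.coe_insert]
      exact Set.insert_subset_insert (hFS.trans (Set.subset_insert _ _))
    · rw [Finset.coe_insert]
      exact (Set.insert_subset_insert hFS).trans (Set.subset_insert _ _)
  · intro F hF
    rw [lkC_restrictC_indepFaces G (Set.mem_insert a _)] at hF
    refine ⟨fun z hz => ?_, hF.2⟩
    obtain ⟨hz, hzN⟩ := hF.1 hz
    simp only [Set.mem_insert_iff, SimpleGraph.mem_neighborSet, not_or] at hz hzN
    rcases hz with rfl | rfl | hz
    · exact absurd rfl hzN.1
    · exact absurd hab hzN.2
    · exact hz

end IndependenceHomology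

section IsolatingEdge

variable {V : Type} {H : SimpleGraph V} {u v w : V}

def edgeClosedNbhd (H : SimpleGraph V) (u v : V) : Set V :=
  {z | z = u ∨ z = v ∨ H.Adj u z ∨ H.Adj v z}

/-- `w` is isolated in `H - N_H[uv]`. -/
def IsIsolatingEdge (H : SimpleGraph V) (u v w : V) : Prop :=
  w ∉ edgeClosedNbhd H u v ∧ ∀ z, H.Adj w z → z ∈ edgeClosedNbhd H u v

theorem edgeClosedNbhd_comm (H : SimpleGraph V) (u v : V) :
    edgeClosedNbhd H u v = edgeClosedNbhd H v u := by
  ext z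
  simp only [edgeClosedNbhd, Set.mem_ofPred_eq]
  tauto

theorem IsIsolatingEdge.symm (h : IsIsolatingEdge H u v w) : IsIsolatingEdge H v u w := by
  rwa [IsIsolatingEdge, ← edgeClosedNbhd_comm]

theorem IsIsolatingEdge.ne_and_not_adj (h : IsIsolatingEdge H u v w) :
    w ≠ u ∧ w ≠ v ∧ ¬H.Adj u w ∧ ¬H.Adj v w := by
  simpa only [edgeClosedNbhd, Set.mem_ofPred_eq, not_or] using h.1

theorem SimpleGraph.deleteEdges_singleton_adj {a b : V} :
    (H.deleteEdges {s(u, v)}).Adj a b ↔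
      H.Adj a b ∧ ¬(a = u ∧ b = v ∨ a = v ∧ b = u) := by
  simp

theorem indepFaces_iff_deleteEdges (he : H.Adj u v) (F : Finset V) :
    indepFaces H F ↔ indepFaces (H.deleteEdges {s(u, v)}) F ∧ ¬(u ∈ F ∧ v ∈ F) := by
  simp only [indepFaces, SimpleGraph.deleteEdges_singleton_adj]
  constructor
  · exact fun h => ⟨fun a ha b hb hab => h a ha b hb hab.1, fun ⟨hu, hv⟩ => h u hu v hv he⟩
  · rintro ⟨h, huv⟩ a ha b hb hab
    refine h a ha b hb ⟨hab, ?_⟩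
    rintro (⟨rfl, rfl⟩ | ⟨rfl, rfl⟩)
    exacts [huv ⟨ha, hb⟩, huv ⟨hb, ha⟩]

theorem restrictC_indepFaces_deleteEdges {S : Set V} (h : u ∉ S ∨ v ∉ S) :
    restrictC (indepFaces (H.deleteEdges {s(u, v)})) S = restrictC (indepFaces H) S := by
  ext F
  simp only [restrictC, indepFaces, SimpleGraph.deleteEdges_singleton_adj]
  refine and_congr_right fun hFS => forall₂_congr fun a ha => forall₂_congr fun b hb => ?_
  have huv : ¬(u ∈ F ∧ v ∈ F) := fun ⟨hu, hv⟩ => h.elim (· (hFS hu)) (· (hFS hv))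
  refine not_congr ⟨And.left, fun hab => ⟨hab, ?_⟩⟩
  rintro (⟨rfl, rfl⟩ | ⟨rfl, rfl⟩)
  exacts [huv ⟨ha, hb⟩, huv ⟨hb, ha⟩]

end IsolatingEdge

section EdgeDeletion

variable {V : Type} [LinearOrder V] {k : Type} [Field k] {H : SimpleGraph V} {u v w : V}

theorem hasNonBoundingCycle_deleteEdges_iff (he : H.Adj u v) (hiso : IsIsolatingEdge H u v w)
    {S : Set V} (hu : u ∈ S) (hv : v ∈ S) (hw : w ∈ S) (j : ℕ) :
    HasNonBoundingCycle k (restrictC (indepFaces H) S) j ↔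
      HasNonBoundingCycle k (restrictC (indepFaces (H.deleteEdges {s(u, v)})) S) j := by
  obtain ⟨hwu, hwv, hnuw, hnvw⟩ := hiso.ne_and_not_adj
  have hu' : u ∈ S \ insert v ((H.deleteEdges {s(u, v)}).neighborSet v) := by
    simp [hu, he.ne]
  refine hasNonBoundingCycle_iff_of_coneLink (w := w) he.ne (isComplex_restrictC_indepFaces _ S)
    (fun F => by simp only [restrictC, indepFaces_iff_deleteEdges he F, and_assoc]) ?_ j
  rw [lkC_restrictC_indepFaces _ hv, lkC_restrictC_indepFaces _ hu']
  refine fun G =>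
    restrictC_indepFaces_insert (by simp [hw, hwu, hwv, hnuw, hnvw]) fun z hz hwz => ?_
  have hz' : ∀ a ∈ ({u, v} : Set V), z ≠ a ∧ ¬(H.deleteEdges {s(u, v)}).Adj a z := by
    rintro a (rfl | rfl)
    exacts [not_or.1 hz.2, not_or.1 hz.1.2]
  obtain ⟨⟨hzu, hnuz⟩, ⟨hzv, hnvz⟩⟩ := And.intro (hz' u (by simp)) (hz' v (by simp))
  have hwz' := (SimpleGraph.deleteEdges_singleton_adj.1 hwz).1
  rcases hiso.2 z hwz' with rfl | rfl | huz | hvz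
  · exact hzu rfl
  · exact hzv rfl
  · refine hnuz (SimpleGraph.deleteEdges_singleton_adj.2 ⟨huz, ?_⟩)
    rintro (⟨-, rfl⟩ | ⟨h, -⟩)
    exacts [hnvw hwz'.symm, he.ne h]
  · refine hnvz (SimpleGraph.deleteEdges_singleton_adj.2 ⟨hvz, ?_⟩)
    rintro (⟨h, -⟩ | ⟨-, rfl⟩)
    exacts [he.ne h.symm, hnuw hwz'.symm]

end EdgeDeletion

theorem SimpleGraph.eq_or_eq_of_degree_eq_two {V : Type} {G : SimpleGraph V} {x a b : V}
    [Fintype (G.neighborSet x)] (hdeg : G.degree x = 2) (ha : G.Adj x a) (hb : G.Adj x b)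
    (hab : a ≠ b) {z : V} (hz : G.Adj x z) : z = a ∨ z = b := by
  classical
  have hN : ({a, b} : Finset V) = G.neighborFinset x :=
    Finset.eq_of_subset_of_card_le (by simp [Finset.insert_subset_iff, ha, hb])
      (by rw [card_neighborFinset_eq_degree, hdeg, Finset.card_pair hab])
  simpa [← hN] using (G.mem_neighborFinset x z).2 hz

section Transfer

variable {V : Type} [LinearOrder V] {k : Type} [Field k]

theorem exists_hasNonBoundingCycle_of_transfer {G₁ G₂ : SimpleGraph V} {u v w x : V}
    (hagree : ∀ S : Set V, u ∉ S ∨ v ∉ S →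
      restrictC (indepFaces G₁) S = restrictC (indepFaces G₂) S)
    (htransfer : ∀ S : Set V, u ∈ S → v ∈ S → w ∈ S → ∀ j,
      HasNonBoundingCycle k (restrictC (indepFaces G₁) S) j →
        HasNonBoundingCycle k (restrictC (indepFaces G₂) S) j)
    (hNw : G₁.neighborSet w = G₂.neighborSet w) (hwu : ¬G₁.Adj w u) (hwv : ¬G₁.Adj w v)
    (hux : G₁.Adj u x) (hwx : G₂.Adj w x) (hx : ∀ z, G₂.Adj x z → z = w ∨ z = u)
    {S : Set V} {j : ℕ} (h : HasNonBoundingCycle k (restrictC (indepFaces G₁) S) j) :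
    ∃ S', HasNonBoundingCycle k (restrictC (indepFaces G₂) S') j := by
  by_cases huv : u ∉ S ∨ v ∉ S
  · exact ⟨S, hagree S huv ▸ h⟩
  obtain ⟨hu, hv⟩ : u ∈ S ∧ v ∈ S := by tauto
  by_cases hw : w ∈ S
  · exact ⟨S, htransfer S hu hv hw j h⟩
  rcases hasNonBoundingCycle_insert_or G₁ hw h with h | h
  · exact ⟨_, htransfer _ (Set.mem_insert_of_mem _ hu) (Set.mem_insert_of_mem _ hv)
      (Set.mem_insert _ _) j h⟩
  have hu₂ : u ∈ S \ G₁.neighborSet w := ⟨hu, hwu⟩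
  obtain _ | m := j
  · exact absurd h (not_hasNonBoundingCycle_restrictC_zero G₁ hu₂)
  rcases hasNonBoundingCycle_diff_or G₁ hu₂ h with h | h
  · exact ⟨_, hagree ((S \ G₁.neighborSet w) \ {u}) (Or.inl fun h => h.2 rfl) ▸ h⟩
  rw [hagree ((S \ G₁.neighborSet w) \ insert u (G₁.neighborSet u))
    (Or.inl fun h => h.2 (Set.mem_insert _ _))] at h
  refine ⟨_, h.insert_insert_of_adj G₂ hwx (fun h => hw h.1.1) (fun h => h.2 (Or.inr hux))
    fun z hz => ⟨fun h => hz.1.2 (hNw ▸ h), fun h => ?_⟩⟩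
  rcases hx z h with rfl | rfl
  · exact hw hz.1.1
  · exact hz.2 (Set.mem_insert _ _)

end Transfer

theorem gReg_eq_of_forall_exists {V : Type} [Fintype V] {k : Type} [Field k]
    {G G' : SimpleGraph V}
    (h : ∀ [LinearOrder V] (j : ℕ) (S : Set V),
      HasNonBoundingCycle k (restrictC (indepFaces G) S) j →
        ∃ S', HasNonBoundingCycle k (restrictC (indepFaces G') S') j)
    (h' : ∀ [LinearOrder V] (j : ℕ) (S : Set V),
      HasNonBoundingCycle k (restrictC (indepFaces G') S) j →
        ∃ S', HasNonBoundingCycle k (restrictC (indepFaces G) S') j) :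
    gReg k G = gReg k G' := by
  unfold gReg regC
  generalize LinearOrder.lift' (Fintype.equivFin V) (Fintype.equivFin V).injective = inst
  congr 1
  ext j
  simp only [Set.mem_ofPred_eq, ← hasNonBoundingCycle_iff_hNontrivial _
    (isComplex_restrictC_indepFaces _ _)]
  exact ⟨fun ⟨S, hS⟩ => h j S hS, fun ⟨S, hS⟩ => h' j S hS⟩

theorem gReg_deleteEdges_eq_of_isIsolatingEdge {V : Type} [Fintype V] (k : Type) [Field k]
    {H : SimpleGraph V} {u v w x : V} (he : H.Adj u v) (hiso : IsIsolatingEdge H u v w)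
    (hwx : H.Adj w x) (hux : H.Adj u x) (hx : ∀ z, H.Adj x z → z = w ∨ z = u) :
    gReg k H = gReg k (H.deleteEdges {s(u, v)}) := by
  obtain ⟨hwu, hwv, hnuw, hnvw⟩ := hiso.ne_and_not_adj
  have hxv : x ≠ v := by rintro rfl; exact hnvw hwx.symm
  have hadj : ∀ {a b}, a ≠ u → a ≠ v →
      ((H.deleteEdges {s(u, v)}).Adj a b ↔ H.Adj a b) :=
    fun hau hav => by simp [hau, hav]
  have hNw : H.neighborSet w = (H.deleteEdges {s(u, v)}).neighborSet w := by
    ext z; exact (hadj hwu hwv).symm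
  have hux' : (H.deleteEdges {s(u, v)}).Adj u x := by simp [hux, hxv, he.ne]
  have hx' : ∀ z, (H.deleteEdges {s(u, v)}).Adj x z → z = w ∨ z = u :=
    fun z h => hx z (SimpleGraph.deleteEdges_singleton_adj.1 h).1
  refine gReg_eq_of_forall_exists (fun j S h => ?_) fun j S h => ?_
  · exact exists_hasNonBoundingCycle_of_transfer
      (fun S hS => (restrictC_indepFaces_deleteEdges hS).symm)
      (fun S hu hv hw j => (hasNonBoundingCycle_deleteEdges_iff he hiso hu hv hw j).1) hNw
      (fun h => hnuw h.symm) (fun h => hnvw h.symm) hux ((hadj hwu hwv).2 hwx) hx' h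
  · exact exists_hasNonBoundingCycle_of_transfer (fun S hS => restrictC_indepFaces_deleteEdges hS)
      (fun S hu hv hw j => (hasNonBoundingCycle_deleteEdges_iff he hiso hu hv hw j).2) hNw.symm
      (fun h => hnuw ((hadj hwu hwv).1 h).symm) (fun h => hnvw ((hadj hwu hwv).1 h).symm) hux' hwx
      hx h

/-- If `e = (u,v)` is an isolating edge of `H` with respect
to `w` (i.e. `w` is isolated in `H - N_H[e]`), and `w` has a neighbor `x` of
degree two, then `reg(H) = reg(H - e)`. -/
theorem gReg_deleteEdge_of_isolating {V : Type} [Fintype V] (k : Type) [Field k]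
    (H : SimpleGraph V) (u v w x : V) (he : H.Adj u v)
    (hw1 : w ∉ ({z | z = u ∨ z = v ∨ H.Adj u z ∨ H.Adj v z} : Set V))
    (hw2 : ∀ z, H.Adj w z → z ∈ ({z | z = u ∨ z = v ∨ H.Adj u z ∨ H.Adj v z} : Set V))
    (hx : H.Adj w x) (hdeg : H.degree x = 2) :
    gReg k H = gReg k (H.deleteEdges {s(u, v)}) := by
  have hiso : IsIsolatingEdge H u v w := ⟨hw1, hw2⟩
  obtain ⟨hwu, hwv, hnuw, hnvw⟩ := hiso.ne_and_not_adj
  rcases hw2 x hx with rfl | rfl | hux | hvx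
  · exact absurd hx.symm hnuw
  · exact absurd hx.symm hnvw
  · exact gReg_deleteEdges_eq_of_isIsolatingEdge k he hiso hx hux fun _ =>
      H.eq_or_eq_of_degree_eq_two hdeg hx.symm hux.symm hwu
  · rw [Sym2.eq_swap]
    exact gReg_deleteEdges_eq_of_isIsolatingEdge k he.symm hiso.symm hx hvx fun _ =>
      H.eq_or_eq_of_degree_eq_two hdeg hx.symm hvx.symm hwv
end
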